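/- arXiv:2109.14342 — 6 statements merged into one kernel-verified Lean document; each statement's English description precedes it below -/
import Mathlib

section
/- Let W: ℝ → [0,∞) be C^∞ with W⁻¹(0) having no accumulation points, W''(ω) > 0 for every zero ω of W, and ∫₀^∞ √(W) = ∫_{−∞}^0 √(W) = ∞. If φ₀ : ℝ → ℝ satisfies E_p(φ₀) = ∫_ℝ ( (1/2)(φ₀')² + W(φ₀) ) dx < ∞ (with φ₀ in H¹_loc), then φ₀ is continuous and the limits lim_{x→−∞} φ₀(x) and lim_{x→+∞} φ₀(x) exist and are zeros of W. -/
open Real Filter MeasureTheory Set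

section Aux

variable {W : ℝ → ℝ}

/-- If `W` vanishes on a nontrivial interval, its zero set has an accumulation point. -/
lemma accPt_of_zero_on_Ioc {s t : ℝ} (hst : s < t)
    (hzero : ∀ y ∈ Set.Ioc s t, W y = 0) :
    AccPt ((s + t) / 2) (Filter.principal (W ⁻¹' {0})) := by
  set m := (s + t) / 2 with hm
  have hms : s < m := by rw [hm]; linarith
  have hmt : m < t := by rw [hm]; linarith
  rw [accPt_iff_nhds]
  intro U hU
  obtain ⟨ε, hε, hball⟩ := Metric.mem_nhds_iff.1 hU
  refine ⟨m + min ε (t - m) / 2, ⟨hball ?_, ?_⟩, ?_⟩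
  · rw [Metric.mem_ball, Real.dist_eq]
    have h1 : 0 < min ε (t - m) := lt_min hε (by linarith)
    have h2 : min ε (t - m) ≤ ε := min_le_left _ _
    rw [abs_of_pos (by linarith)]
    linarith
  · have h1 : 0 < min ε (t - m) := lt_min hε (by linarith)
    have h2 : min ε (t - m) ≤ t - m := min_le_right _ _
    have : m + min ε (t - m) / 2 ∈ Set.Ioc s t := ⟨by linarith, by linarith⟩
    simpa using hzero _ this
  · have h1 : 0 < min ε (t - m) := lt_min hε (by linarith)
    intro h
    nlinarith [congrArg (· - m) h]

end Aux

/-- Under assumptions (A1)–(A4) on `W`, every finite-energy state `φ₀`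
is continuous and converges at `±∞` to zeros of `W`. -/
theorem finite_energy_sectors
    (W : ℝ → ℝ) (hW : ContDiff ℝ (⊤ : ℕ∞) W) (hWnonneg : ∀ y, 0 ≤ W y)
    (hacc : ∀ x : ℝ, ¬ AccPt x (Filter.principal (W ⁻¹' {0})))
    (hnondeg : ∀ ω, W ω = 0 → 0 < iteratedDeriv 2 W ω)
    (hdivTop : ¬ IntegrableOn (fun y => Real.sqrt (W y)) (Set.Ici 0))
    (hdivBot : ¬ IntegrableOn (fun y => Real.sqrt (W y)) (Set.Iic 0))
    (φ₀ : ℝ → ℝ) (hdiff : Differentiable ℝ φ₀)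
    (hE : Integrable (fun x => (1/2) * (deriv φ₀ x)^2 + W (φ₀ x))) :
    Continuous φ₀ ∧
      (∃ a, Tendsto φ₀ atBot (nhds a) ∧ W a = 0) ∧
      (∃ b, Tendsto φ₀ atTop (nhds b) ∧ W b = 0) := by
  have hWc : Continuous W := hW.continuous
  have hφc : Continuous φ₀ := hdiff.continuous
  set f : ℝ → ℝ := fun y => Real.sqrt (W y) with hf
  have hfc : Continuous f := continuous_sqrt.comp hWc
  have hfnn : ∀ y, 0 ≤ f y := fun y => Real.sqrt_nonneg _
  have hfint : ∀ a b : ℝ, IntervalIntegrable f volume a b := fun a b =>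
    hfc.intervalIntegrable a b
  set G : ℝ → ℝ := fun t => ∫ y in (0:ℝ)..t, f y with hG
  -- basic: G t - G s = ∫ s..t f
  have hGsub : ∀ s t : ℝ, G t - G s = ∫ y in s..t, f y := fun s t =>
    intervalIntegral.integral_interval_sub_left (hfint 0 t) (hfint 0 s)
  -- G is monotone
  have hGmono : Monotone G := by
    intro s t hst
    have h : (0:ℝ) ≤ ∫ y in s..t, f y :=
      intervalIntegral.integral_nonneg hst (fun u _ => hfnn u)
    have := hGsub s t
    linarith
  -- G is injective
  have hGne : ∀ s t : ℝ, s < t → G s ≠ G t := by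
    intro s t hlt hstEq
    have hzero : ∫ y in s..t, f y = 0 := by
      have := hGsub s t; rw [hstEq] at this; linarith
    have hae : f =ᵐ[volume.restrict (Set.Ioc s t)] 0 := by
      refine (intervalIntegral.integral_eq_zero_iff_of_le_of_nonneg_ae hlt.le ?_
        (hfint s t)).1 hzero
      exact Filter.Eventually.of_forall (fun y => hfnn y)
    have heq : Set.EqOn f 0 (Set.Ioc s t) :=
      MeasureTheory.Measure.eqOn_Ioc_of_ae_eq volume hae hfc.continuousOn
        continuous_const.continuousOn
    have hWzero : ∀ y ∈ Set.Ioc s t, W y = 0 := by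
      intro y hy
      have h0 : Real.sqrt (W y) = 0 := heq hy
      have := (Real.sqrt_eq_zero').1 h0
      exact le_antisymm this (hWnonneg y)
    exact hacc _ (accPt_of_zero_on_Ioc hlt hWzero)
  have hGinj : Function.Injective G := by
    intro s t hstEq
    by_contra hne
    rcases lt_or_gt_of_ne hne with hlt | hlt
    · exact hGne s t hlt hstEq
    · exact hGne t s hlt hstEq.symm
  have hGsm : StrictMono G := hGmono.strictMono_of_injective hGinj
  -- derivative of G
  have hGderiv : ∀ t, HasDerivAt G (f t) t := by
    intro t
    exact intervalIntegral.integral_hasDerivAt_right (hfint 0 t)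
      (hfc.stronglyMeasurableAtFilter _ _) hfc.continuousAt
  have hGc : Continuous G := by
    have : Differentiable ℝ G := fun t => (hGderiv t).differentiableAt
    exact this.continuous
  -- G tends to ±∞
  have hGtop : Tendsto G atTop atTop := by
    apply tendsto_atTop_atTop_of_monotone' hGmono
    rintro ⟨M, hM⟩
    apply hdivTop
    rw [hf, integrableOn_Ici_iff_integrableOn_Ioi]
    refine MeasureTheory.integrableOn_Ioi_of_intervalIntegral_norm_bounded M 0
      (b := fun i : ℝ => i) (fun i => hfc.integrableOn_Icc.mono_set Set.Ioc_subset_Icc_self)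
      tendsto_id ?_
    filter_upwards [Filter.eventually_ge_atTop (0:ℝ)] with i _
    have : ∫ x in (0:ℝ)..i, ‖f x‖ = G i := by
      rw [hG]
      apply intervalIntegral.integral_congr
      intro y _
      exact Real.norm_of_nonneg (hfnn y)
    rw [this]
    exact hM (Set.mem_range_self i)
  have hGbot : Tendsto G atBot atBot := by
    apply tendsto_atBot_atBot_of_monotone' hGmono
    rintro ⟨M, hM⟩
    apply hdivBot
    refine MeasureTheory.integrableOn_Iic_of_intervalIntegral_norm_bounded (-M) 0
      (a := fun i : ℝ => i) (fun i => hfc.integrableOn_Icc.mono_set Set.Ioc_subset_Icc_self)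
      tendsto_id ?_
    filter_upwards [Filter.eventually_le_atBot (0:ℝ)] with i _
    have h1 : ∫ x in i..(0:ℝ), ‖f x‖ = G 0 - G i := by
      rw [hGsub i 0]
      apply intervalIntegral.integral_congr
      intro y _
      exact Real.norm_of_nonneg (hfnn y)
    have h2 : G 0 = 0 := by simp [hG]
    rw [h1, h2]
    have := hM (Set.mem_range_self i)
    linarith
  have hGsurj : Function.Surjective G := hGc.surjective hGtop hGbot
  -- the order isomorphism induced by G and its continuous inverse
  set E := StrictMono.orderIsoOfSurjective G hGsm hGsurj with hE'
  have hEsymm_cont : Continuous (fun y => E.symm y) :=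
    E.toHomeomorph.symm.continuous
  have hEsymmG : ∀ x : ℝ, E.symm (G x) = x := fun x =>
    StrictMono.orderIsoOfSurjective_symm_apply_self G hGsm hGsurj x
  -- derivative along the flow
  set h' : ℝ → ℝ := fun x => f (φ₀ x) * deriv φ₀ x with hh'
  set H : ℝ → ℝ := fun x => G (φ₀ x) with hH
  have hHderiv : ∀ x, HasDerivAt H (h' x) x := by
    intro x
    exact (hGderiv (φ₀ x)).comp x ((hdiff x).hasDerivAt)
  -- pointwise bound of |h'| by the energy density
  have hbound : ∀ x, ‖h' x‖ ≤ (1/2) * (deriv φ₀ x)^2 + W (φ₀ x) := by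
    intro x
    set a := Real.sqrt (W (φ₀ x)) with ha
    set d := deriv φ₀ x with hd
    have h1 : a ^ 2 = W (φ₀ x) := Real.sq_sqrt (hWnonneg _)
    have h3 : ‖h' x‖ = a * |d| := by
      rw [hh']
      simp only [norm_mul, Real.norm_eq_abs]
      rw [abs_of_nonneg (Real.sqrt_nonneg _)]
    rw [h3]
    nlinarith [sq_abs d, hWnonneg (φ₀ x), two_mul_le_add_sq a |d|]
  -- integrability facts
  have hmeas_deriv : Measurable (deriv φ₀) := measurable_deriv φ₀
  have hh'int : Integrable h' := by
    refine hE.mono' ?_ (Filter.Eventually.of_forall hbound)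
    exact ((hfc.comp hφc).measurable.mul hmeas_deriv).aestronglyMeasurable
  have hWφint : Integrable (fun x => W (φ₀ x)) := by
    refine hE.mono' (hWc.comp hφc).aestronglyMeasurable ?_
    refine Filter.Eventually.of_forall (fun x => ?_)
    rw [Real.norm_of_nonneg (hWnonneg _)]
    nlinarith [sq_nonneg (deriv φ₀ x)]
  -- fundamental theorem of calculus
  have hFTC : ∀ x : ℝ, H x = H 0 + ∫ y in (0:ℝ)..x, h' y := by
    intro x
    have := intervalIntegral.integral_eq_sub_of_hasDerivAt
      (f := H) (f' := h') (a := 0) (b := x) (fun t _ => hHderiv t)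
      (hh'int.intervalIntegrable)
    rw [this]; ring
  -- convergence of H at ±∞
  have hHtop : Tendsto H atTop (nhds (H 0 + ∫ y in Set.Ioi (0:ℝ), h' y)) := by
    have h1 : Tendsto (fun x : ℝ => ∫ y in (0:ℝ)..x, h' y) atTop
        (nhds (∫ y in Set.Ioi (0:ℝ), h' y)) :=
      MeasureTheory.intervalIntegral_tendsto_integral_Ioi 0 hh'int.integrableOn tendsto_id
    have h2 := (tendsto_const_nhds (x := H 0) (f := atTop)).add h1
    refine h2.congr (fun x => (hFTC x).symm)
  have hHbot : Tendsto H atBot (nhds (H 0 - ∫ y in Set.Iic (0:ℝ), h' y)) := by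
    have h1 : Tendsto (fun x : ℝ => ∫ y in x..(0:ℝ), h' y) atBot
        (nhds (∫ y in Set.Iic (0:ℝ), h' y)) :=
      MeasureTheory.intervalIntegral_tendsto_integral_Iic 0 hh'int.integrableOn tendsto_id
    have h2 := (tendsto_const_nhds (x := H 0) (f := atBot)).sub h1
    refine h2.congr (fun x => ?_)
    rw [hFTC x, intervalIntegral.integral_symm x 0]
    ring
  -- transport through the inverse of G
  have hφeq : ∀ x, φ₀ x = E.symm (H x) := fun x => (hEsymmG (φ₀ x)).symm
  have hφtop : Tendsto φ₀ atTop (nhds (E.symm (H 0 + ∫ y in Set.Ioi (0:ℝ), h' y))) := by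
    have := (hEsymm_cont.tendsto _).comp hHtop
    exact this.congr (fun x => (hφeq x).symm)
  have hφbot : Tendsto φ₀ atBot (nhds (E.symm (H 0 - ∫ y in Set.Iic (0:ℝ), h' y))) := by
    have := (hEsymm_cont.tendsto _).comp hHbot
    exact this.congr (fun x => (hφeq x).symm)
  -- limit values are zeros of W
  have key : ∀ c : ℝ, Tendsto φ₀ atTop (nhds c) ∨ Tendsto φ₀ atBot (nhds c) → W c = 0 := by
    intro c hc
    by_contra hne
    have hpos : 0 < W c := lt_of_le_of_ne (hWnonneg c) (Ne.symm hne)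
    have hfin : volume {x : ℝ | W c / 2 ≤ W (φ₀ x)} < ⊤ :=
      hWφint.measure_ge_lt_top (by linarith)
    rcases hc with hc | hc
    · have hT : Tendsto (fun x => W (φ₀ x)) atTop (nhds (W c)) :=
        (hWc.tendsto c).comp hc
      have hev : ∀ᶠ x in atTop, W c / 2 ≤ W (φ₀ x) :=
        hT.eventually (eventually_ge_nhds (by linarith))
      obtain ⟨M, hM⟩ := hev.exists_forall_of_atTop
      have hsub : Set.Ici M ⊆ {x : ℝ | W c / 2 ≤ W (φ₀ x)} := fun x hx => hM x hx
      have : volume (Set.Ici M) ≤ volume {x : ℝ | W c / 2 ≤ W (φ₀ x)} :=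
        measure_mono hsub
      rw [Real.volume_Ici] at this
      exact absurd (lt_of_le_of_lt this hfin) (lt_irrefl _)
    · have hT : Tendsto (fun x => W (φ₀ x)) atBot (nhds (W c)) :=
        (hWc.tendsto c).comp hc
      have hev : ∀ᶠ x in atBot, W c / 2 ≤ W (φ₀ x) :=
        hT.eventually (eventually_ge_nhds (by linarith))
      obtain ⟨M, hM⟩ := hev.exists_forall_of_atBot
      have hsub : Set.Iic M ⊆ {x : ℝ | W c / 2 ≤ W (φ₀ x)} := fun x hx => hM x hx
      have : volume (Set.Iic M) ≤ volume {x : ℝ | W c / 2 ≤ W (φ₀ x)} :=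
        measure_mono hsub
      rw [Real.volume_Iic] at this
      exact absurd (lt_of_le_of_lt this hfin) (lt_irrefl _)
  exact ⟨hφc, ⟨_, hφbot, key _ (Or.inr hφbot)⟩, ⟨_, hφtop, key _ (Or.inl hφtop)⟩⟩
end

section
/- Let W be C^∞, W ≥ 0, and let ω be a zero of W with m := √(W''(ω)) > 0. Suppose H : ℝ → ℝ is an increasing solution of H'(x) = √(2W(H(x))) with H(x) > ω for all x and lim_{x→−∞} H(x) = ω. Then there exists C > 0 such that |H(x) − ω| ≤ C e^{m x} for all x ≤ 0. -/
open Real Filter Set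

set_option maxHeartbeats 1000000

/-- Exponential approach of a kink to its vacuum at `-∞`, at the rate of the
mass `m = √(W''(ω))`. -/
theorem kink_exponential_decay
    (W : ℝ → ℝ) (hW : ContDiff ℝ (⊤ : ℕ∞) W) (hWnonneg : ∀ y, 0 ≤ W y)
    (ω : ℝ) (hz : W ω = 0)
    (m : ℝ) (hm : m = Real.sqrt (iteratedDeriv 2 W ω)) (hmpos : 0 < m)
    (H : ℝ → ℝ) (hmono : StrictMono H)
    (hODE : ∀ x, HasDerivAt H (Real.sqrt (2 * W (H x))) x)
    (habove : ∀ x, ω < H x)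
    (hlim : Tendsto H atBot (nhds ω)) :
    ∃ C > 0, ∀ x ≤ (0:ℝ), |H x - ω| ≤ C * Real.exp (m * x) := by
  -- Smoothness of derivatives
  have hW' : ContDiff ℝ ((⊤:ℕ∞) : WithTop ℕ∞) W := hW.of_le (by simp)
  have hWd : Differentiable ℝ W := (contDiff_infty_iff_deriv.mp hW').1
  have hW1 : ContDiff ℝ ((⊤:ℕ∞) : WithTop ℕ∞) (deriv W) := (contDiff_infty_iff_deriv.mp hW').2
  have hW1d : Differentiable ℝ (deriv W) := (contDiff_infty_iff_deriv.mp hW1).1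
  have hW2 : ContDiff ℝ ((⊤:ℕ∞) : WithTop ℕ∞) (deriv (deriv W)) := (contDiff_infty_iff_deriv.mp hW1).2
  have hW2d : Differentiable ℝ (deriv (deriv W)) := (contDiff_infty_iff_deriv.mp hW2).1
  have hW3c : Continuous (deriv (deriv (deriv W))) :=
    (contDiff_infty_iff_deriv.mp hW2).2.continuous
  -- first derivative vanishes at the minimum
  have hd1 : deriv W ω = 0 := by
    have hmin : IsLocalMin W ω :=
      Filter.Eventually.of_forall fun y => by rw [hz]; exact hWnonneg y
    exact hmin.deriv_eq_zero
  -- second derivative equals m^2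
  have hd2 : deriv (deriv W) ω = m ^ 2 := by
    have h2 : iteratedDeriv 2 W ω = deriv (deriv W) ω := by
      rw [iteratedDeriv_succ, iteratedDeriv_one]
    have hnn : 0 < iteratedDeriv 2 W ω := Real.sqrt_pos.mp (hm ▸ hmpos)
    rw [hm, Real.sq_sqrt hnn.le, h2]
  -- bound on the third derivative on [ω, ω+1]
  obtain ⟨L0, hL0⟩ := (isCompact_Icc (a := ω) (b := ω + 1)).exists_bound_of_continuousOn
    hW3c.continuousOn
  set L : ℝ := max L0 0 with hLdef
  have hL : 0 ≤ L := le_max_right _ _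
  have hLb : ∀ x ∈ Icc ω (ω + 1), ‖deriv (deriv (deriv W)) x‖ ≤ L :=
    fun x hx => (hL0 x hx).trans (le_max_left _ _)
  -- Lipschitz bound for W'' via MVT
  have hlip : ∀ x ∈ Icc ω (ω + 1),
      ‖deriv (deriv W) x - deriv (deriv W) ω‖ ≤ L * (x - ω) :=
    norm_image_sub_le_of_norm_deriv_le_segment'
      (fun x _ => (hW2d x).hasDerivAt.hasDerivWithinAt)
      (fun x hx => hLb x (Ico_subset_Icc_self hx))
  have hg_lb : ∀ s ∈ Icc (0:ℝ) 1, m ^ 2 - L * s ≤ deriv (deriv W) (ω + s) := by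
    intro s hs
    have hmem : ω + s ∈ Icc ω (ω + 1) := ⟨by linarith [hs.1], by linarith [hs.2]⟩
    have := hlip (ω + s) hmem
    rw [Real.norm_eq_abs, abs_le] at this
    have h1 := this.1
    rw [hd2] at h1
    simp only [add_sub_cancel_left] at h1
    linarith
  -- lower bound for W' on [0,1]
  have hW1_lb : ∀ s ∈ Icc (0:ℝ) 1, m ^ 2 * s - L * s ^ 2 / 2 ≤ deriv W (ω + s) := by
    have hPd : ∀ s : ℝ, HasDerivAt (fun s => deriv W (ω + s) - (m ^ 2 * s - L * s ^ 2 / 2))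
        (deriv (deriv W) (ω + s) - (m ^ 2 - L * s)) s := by
      intro s
      have h1 : HasDerivAt (fun s => deriv W (ω + s)) (deriv (deriv W) (ω + s)) s := by
        have := ((hW1d (ω + s)).hasDerivAt).comp s ((hasDerivAt_id s).const_add ω)
        simpa [Function.comp_def] using this
      have h2 : HasDerivAt (fun s : ℝ => m ^ 2 * s - L * s ^ 2 / 2) (m ^ 2 - L * s) s := by
        have := ((hasDerivAt_id s).const_mul (m ^ 2)).sub
          (((hasDerivAt_pow 2 s).const_mul L).div_const 2)
        exact (this.congr_deriv (by ring)).congr_of_eventuallyEq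
          (Filter.Eventually.of_forall fun _ => rfl)
      exact h1.sub h2
    have hmono' : MonotoneOn (fun s => deriv W (ω + s) - (m ^ 2 * s - L * s ^ 2 / 2))
        (Icc (0:ℝ) 1) := by
      apply monotoneOn_of_deriv_nonneg (convex_Icc 0 1)
      · exact fun s _ => ((hPd s).differentiableAt.continuousAt).continuousWithinAt
      · exact fun s _ => (hPd s).differentiableAt.differentiableWithinAt
      · intro s hs
        rw [interior_Icc] at hs
        rw [(hPd s).deriv]
        have := hg_lb s ⟨hs.1.le, hs.2.le⟩
        linarith
    intro s hs
    have h0 : (0:ℝ) ∈ Icc (0:ℝ) 1 := ⟨le_rfl, zero_le_one⟩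
    have := hmono' h0 hs hs.1
    simp only [add_zero, hd1] at this
    linarith [this]
  -- lower bound for W on [0,1]
  have hWlow : ∀ u ∈ Icc (0:ℝ) 1, m ^ 2 * u ^ 2 / 2 - L * u ^ 3 / 6 ≤ W (ω + u) := by
    have hQd : ∀ u : ℝ, HasDerivAt (fun u => W (ω + u) - (m ^ 2 * u ^ 2 / 2 - L * u ^ 3 / 6))
        (deriv W (ω + u) - (m ^ 2 * u - L * u ^ 2 / 2)) u := by
      intro u
      have h1 : HasDerivAt (fun u => W (ω + u)) (deriv W (ω + u)) u := by
        have := ((hWd (ω + u)).hasDerivAt).comp u ((hasDerivAt_id u).const_add ω)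
        simpa [Function.comp_def] using this
      have h2 : HasDerivAt (fun u : ℝ => m ^ 2 * u ^ 2 / 2 - L * u ^ 3 / 6)
          (m ^ 2 * u - L * u ^ 2 / 2) u := by
        have := (((hasDerivAt_pow 2 u).const_mul (m ^ 2)).div_const 2).sub
          (((hasDerivAt_pow 3 u).const_mul L).div_const 6)
        exact (this.congr_deriv (by ring)).congr_of_eventuallyEq
          (Filter.Eventually.of_forall fun _ => rfl)
      exact h1.sub h2
    have hmono' : MonotoneOn (fun u => W (ω + u) - (m ^ 2 * u ^ 2 / 2 - L * u ^ 3 / 6))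
        (Icc (0:ℝ) 1) := by
      apply monotoneOn_of_deriv_nonneg (convex_Icc 0 1)
      · exact fun u _ => ((hQd u).differentiableAt.continuousAt).continuousWithinAt
      · exact fun u _ => (hQd u).differentiableAt.differentiableWithinAt
      · intro u hu
        rw [interior_Icc] at hu
        rw [(hQd u).deriv]
        have := hW1_lb u ⟨hu.1.le, hu.2.le⟩
        linarith
    intro u hu
    have h0 : (0:ℝ) ∈ Icc (0:ℝ) 1 := ⟨le_rfl, zero_le_one⟩
    have := hmono' h0 hu hu.1
    simp only [add_zero, hz] at this
    linarith [this]
  -- the constant K and the sqrt lower bound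
  set K : ℝ := L / (3 * m) + 1 with hKdef
  have hK : 0 < K := by positivity
  have hmK : m * K = L / 3 + m := by
    rw [hKdef]; field_simp
  set δ₀ : ℝ := min 1 (m / K) with hδ₀def
  have hδ₀pos : 0 < δ₀ := lt_min one_pos (by positivity)
  have key : ∀ u : ℝ, 0 ≤ u → u ≤ δ₀ →
      m * u - K * u ^ 2 ≤ Real.sqrt (2 * W (ω + u)) := by
    intro u hu0 huδ
    have h1 : u ≤ 1 := huδ.trans (min_le_left _ _)
    have h2 : u ≤ m / K := huδ.trans (min_le_right _ _)
    have hKu : K * u ≤ m := by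
      rw [le_div_iff₀ hK] at h2; linarith [h2]
    apply Real.le_sqrt_of_sq_le
    have hWl := hWlow u ⟨hu0, h1⟩
    have hint1 : 0 ≤ K * u ^ 3 * (m - K * u) :=
      mul_nonneg (mul_nonneg hK.le (pow_nonneg hu0 3)) (by linarith)
    have hint2 : 0 ≤ m * u ^ 3 := mul_nonneg hmpos.le (pow_nonneg hu0 3)
    have hsub : L * u ^ 3 = (3 * (m * K) - 3 * m) * u ^ 3 := by rw [hmK]; ring
    nlinarith [hWl, hint1, hint2, hsub]
  -- choose x₀
  set δ : ℝ := min δ₀ (m / (2 * K)) with hδdef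
  have hδpos : 0 < δ := lt_min hδ₀pos (by positivity)
  obtain ⟨x₀', hx₀'⟩ := (hlim.eventually_lt_const (by linarith : ω < ω + δ)).exists
  set x₀ : ℝ := min x₀' 0 with hx₀def
  have hx₀0 : x₀ ≤ 0 := min_le_right _ _
  have hx₀ : H x₀ < ω + δ := lt_of_le_of_lt (hmono.monotone (min_le_left _ _)) hx₀'
  have hun : ∀ x, 0 < H x - ω := fun x => sub_pos.mpr (habove x)
  have husm : ∀ x, x ≤ x₀ → H x - ω < δ := by
    intro x hx
    have := hmono.monotone hx
    linarith [hx₀]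
  -- sqrt bound along H
  have hsb : ∀ x, x ≤ x₀ →
      m * (H x - ω) - K * (H x - ω) ^ 2 ≤ Real.sqrt (2 * W (H x)) := by
    intro x hx
    have h := key (H x - ω) (hun x).le
      (le_trans (husm x hx).le (min_le_left _ _))
    rwa [add_sub_cancel] at h
  -- the comparison function F
  set F : ℝ → ℝ := fun x => Real.exp (m * x) / (H x - ω) - K / m * Real.exp (m * x)
    with hFdef
  have hexp : ∀ x : ℝ, HasDerivAt (fun x => Real.exp (m * x)) (m * Real.exp (m * x)) x := by
    intro x
    have := (Real.hasDerivAt_exp (m * x)).comp x ((hasDerivAt_id x).const_mul m)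
    simpa [mul_comm, Function.comp_def] using this
  have hF' : ∀ x : ℝ, HasDerivAt F
      ((m * Real.exp (m * x) * (H x - ω) - Real.exp (m * x) * Real.sqrt (2 * W (H x)))
        / (H x - ω) ^ 2 - K / m * (m * Real.exp (m * x))) x := by
    intro x
    exact ((hexp x).div ((hODE x).sub_const ω) (ne_of_gt (hun x))).sub
      ((hexp x).const_mul (K / m))
  have hanti : AntitoneOn F (Iic x₀) := by
    apply antitoneOn_of_deriv_nonpos (convex_Iic x₀)
    · exact fun x _ => ((hF' x).differentiableAt.continuousAt).continuousWithinAt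
    · exact fun x _ => (hF' x).differentiableAt.differentiableWithinAt
    · intro x hx
      rw [interior_Iic] at hx
      rw [(hF' x).deriv]
      have hu := hun x
      have he := Real.exp_pos (m * x)
      have h1 := hsb x hx.le
      have h2 : (m * Real.exp (m * x) * (H x - ω)
          - Real.exp (m * x) * Real.sqrt (2 * W (H x))) / (H x - ω) ^ 2
          ≤ K * Real.exp (m * x) := by
        rw [div_le_iff₀ (by positivity)]
        nlinarith [mul_le_mul_of_nonneg_left h1 he.le]
      have h3 : K / m * (m * Real.exp (m * x)) = K * Real.exp (m * x) := by
        field_simp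
      linarith
  -- lower bound for F at x₀ and hence on Iic x₀
  have hu₀ : H x₀ - ω < m / (2 * K) :=
    lt_of_lt_of_le (husm x₀ le_rfl) (min_le_right _ _)
  set c₀ : ℝ := Real.exp (m * x₀) * (K / m) with hc₀def
  have hc₀pos : 0 < c₀ := by positivity
  have hFx₀ : c₀ ≤ F x₀ := by
    have hu := hun x₀
    have he := Real.exp_pos (m * x₀)
    have h : Real.exp (m * x₀) * (2 * K / m) ≤ Real.exp (m * x₀) / (H x₀ - ω) := by
      rw [le_div_iff₀ hu]
      have h2K : (2 * K / m) * (H x₀ - ω) ≤ 1 := by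
        rw [div_mul_eq_mul_div, div_le_one hmpos]
        have h5 := (lt_div_iff₀ (by positivity : (0:ℝ) < 2 * K)).mp hu₀
        nlinarith [h5]
      nlinarith [h2K, he.le]
    have : Real.exp (m * x₀) * (2 * K / m) - K / m * Real.exp (m * x₀) = c₀ := by
      rw [hc₀def]; ring
    simp only [hFdef]
    linarith
  -- conclusion on Iic x₀
  have hbound1 : ∀ x, x ≤ x₀ → H x - ω ≤ (1 / c₀) * Real.exp (m * x) := by
    intro x hx
    have hF := hanti (mem_Iic.mpr hx) (mem_Iic.mpr le_rfl) hx
    have he := Real.exp_pos (m * x)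
    have hu := hun x
    have hq : c₀ ≤ Real.exp (m * x) / (H x - ω) := by
      have hKm : 0 ≤ K / m * Real.exp (m * x) := by positivity
      have hF0 := hFx₀
      simp only [hFdef] at hF hF0
      linarith
    rw [le_div_iff₀ hu] at hq
    calc H x - ω = (1 / c₀) * (c₀ * (H x - ω)) := by field_simp
      _ ≤ (1 / c₀) * Real.exp (m * x) :=
          mul_le_mul_of_nonneg_left hq (by positivity)
  -- final constant
  refine ⟨max (1 / c₀) ((H 0 - ω) * Real.exp (-(m * x₀))), lt_max_of_lt_left (by positivity), ?_⟩
  intro x hx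
  have hu := hun x
  rw [abs_of_pos hu]
  rcases le_or_gt x x₀ with h | h
  · calc H x - ω ≤ (1 / c₀) * Real.exp (m * x) := hbound1 x h
      _ ≤ _ := by
          apply mul_le_mul_of_nonneg_right (le_max_left _ _) (Real.exp_pos _).le
  · have h1 : H x - ω ≤ H 0 - ω := by
      have := hmono.monotone hx; linarith
    have h2 : Real.exp (m * x₀) ≤ Real.exp (m * x) :=
      Real.exp_le_exp.mpr (mul_le_mul_of_nonneg_left h.le hmpos.le)
    have h3 : H 0 - ω ≤ (H 0 - ω) * Real.exp (-(m * x₀)) * Real.exp (m * x) := by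
      have h4 : (1:ℝ) = Real.exp (-(m * x₀)) * Real.exp (m * x₀) := by
        rw [← Real.exp_add]; simp
      calc H 0 - ω = (H 0 - ω) * (Real.exp (-(m * x₀)) * Real.exp (m * x₀)) := by
            rw [← h4]; ring
        _ ≤ (H 0 - ω) * Real.exp (-(m * x₀)) * Real.exp (m * x) := by
            rw [← mul_assoc]
            apply mul_le_mul_of_nonneg_left h2
            exact mul_nonneg (hun 0).le (Real.exp_pos _).le
    calc H x - ω ≤ H 0 - ω := h1
      _ ≤ (H 0 - ω) * Real.exp (-(m * x₀)) * Real.exp (m * x) := h3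
      _ ≤ _ := mul_le_mul_of_nonneg_right (le_max_right _ _) (Real.exp_pos _).le
end

section
/- Under the same hypotheses (H increasing, H' = √(2W(H)), H → ω as x → −∞, m = √(W''(ω)) > 0), for each k ≥ 1 there exists C_k > 0 such that |∂_x^k H(x)| ≤ C_k e^{m x} for all x ≤ 0. -/
set_option maxHeartbeats 1000000
open Real Filter Set

private lemma monoOn_hasDeriv {F F' : ℝ → ℝ} {s : Set ℝ} (hs : Convex ℝ s)
    (hF : ∀ x ∈ s, HasDerivAt F (F' x) x) (h0 : ∀ x ∈ s, 0 ≤ F' x) : MonotoneOn F s := by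
  apply monotoneOn_of_deriv_nonneg hs
  · exact fun x hx => (hF x hx).continuousAt.continuousWithinAt
  · exact fun x hx => ((hF x (interior_subset hx)).differentiableAt).differentiableWithinAt
  · intro x hx
    rw [(hF x (interior_subset hx)).deriv]
    exact h0 x (interior_subset hx)

private lemma antiOn_hasDeriv {F F' : ℝ → ℝ} {s : Set ℝ} (hs : Convex ℝ s)
    (hF : ∀ x ∈ s, HasDerivAt F (F' x) x) (h0 : ∀ x ∈ s, F' x ≤ 0) : AntitoneOn F s := by
  apply antitoneOn_of_deriv_nonpos hs
  · exact fun x hx => (hF x hx).continuousAt.continuousWithinAt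
  · exact fun x hx => ((hF x (interior_subset hx)).differentiableAt).differentiableWithinAt
  · intro x hx
    rw [(hF x (interior_subset hx)).deriv]
    exact h0 x (interior_subset hx)

private lemma poly_bound_right {g : ℝ → ℝ} (hg : Differentiable ℝ g) {a b M : ℝ} {j : ℕ}
    (h0 : g a = 0) (hM : 0 ≤ M)
    (hd : ∀ t ∈ Icc a b, |deriv g t| ≤ M * (t - a) ^ j) :
    ∀ t ∈ Icc a b, |g t| ≤ M * (t - a) ^ (j + 1) := by
  have key : ∀ (σ : ℝ), σ = 1 ∨ σ = -1 → ∀ t ∈ Icc a b, 0 ≤ M * (t - a) ^ (j + 1) - σ * g t := by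
    intro σ hσ t ht
    have hmono : MonotoneOn (fun t => M * (t - a) ^ (j + 1) - σ * g t) (Icc a b) := by
      apply monoOn_hasDeriv (convex_Icc a b)
        (F' := fun t => M * ((j + 1) * (t - a) ^ j * 1) - σ * deriv g t)
      · intro x hx
        have h := ((((hasDerivAt_id x).sub_const a).pow (j + 1)).const_mul M).sub
          (((hg x).hasDerivAt).const_mul σ)
        simp only [id_eq] at h
        refine h.congr_deriv ?_
        push_cast
        ring
      · intro x hx
        have h1 : |deriv g x| ≤ M * (x - a) ^ j := hd x hx
        have h2 : σ * deriv g x ≤ |deriv g x| := by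
          rcases hσ with h | h <;> rw [h] <;> simp [abs_le, le_abs_self, neg_abs_le] <;>
            cases abs_cases (deriv g x) <;> linarith [le_abs_self (deriv g x), neg_abs_le (deriv g x)]
        have h3 : (0:ℝ) ≤ (j:ℝ) * (x - a) ^ j := by
          have : (0:ℝ) ≤ (x - a) ^ j := pow_nonneg (by linarith [hx.1]) j
          positivity
        have h4 : (0:ℝ) ≤ (x - a) ^ j := pow_nonneg (by linarith [hx.1]) j
        push_cast
        nlinarith
    have := hmono (left_mem_Icc.mpr (ht.1.trans ht.2)) ht ht.1
    simpa [h0] using this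
  intro t ht
  have k1 := key 1 (Or.inl rfl) t ht
  have k2 := key (-1) (Or.inr rfl) t ht
  rw [abs_le]
  constructor <;> linarith

private lemma poly_bound_left {g : ℝ → ℝ} (hg : Differentiable ℝ g) {a b M : ℝ} {j : ℕ}
    (h0 : g b = 0) (hM : 0 ≤ M)
    (hd : ∀ t ∈ Icc a b, |deriv g t| ≤ M * (b - t) ^ j) :
    ∀ t ∈ Icc a b, |g t| ≤ M * (b - t) ^ (j + 1) := by
  have key : ∀ (σ : ℝ), σ = 1 ∨ σ = -1 → ∀ t ∈ Icc a b, 0 ≤ M * (b - t) ^ (j + 1) - σ * g t := by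
    intro σ hσ t ht
    have hanti : AntitoneOn (fun t => M * (b - t) ^ (j + 1) - σ * g t) (Icc a b) := by
      apply antiOn_hasDeriv (convex_Icc a b)
        (F' := fun t => M * ((j + 1) * (b - t) ^ j * (-1)) - σ * deriv g t)
      · intro x hx
        have h := ((((hasDerivAt_id x).neg.const_add b).pow (j + 1)).const_mul M).sub
          (((hg x).hasDerivAt).const_mul σ)
        simp only [Pi.neg_apply, id_eq, ← sub_eq_add_neg] at h
        refine h.congr_deriv ?_
        push_cast
        ring
      · intro x hx
        have h1 : |deriv g x| ≤ M * (b - x) ^ j := hd x hx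
        have h2 : -(σ * deriv g x) ≤ |deriv g x| := by
          rcases hσ with h | h <;> rw [h] <;>
            cases abs_cases (deriv g x) <;> linarith [le_abs_self (deriv g x), neg_abs_le (deriv g x)]
        have h4 : (0:ℝ) ≤ (b - x) ^ j := pow_nonneg (by linarith [hx.2]) j
        have h3 : (0:ℝ) ≤ (j:ℝ) * (b - x) ^ j := by positivity
        push_cast
        nlinarith
    have := hanti ht (right_mem_Icc.mpr (ht.1.trans ht.2)) ht.2
    simpa [h0] using this
  intro t ht
  have k1 := key 1 (Or.inl rfl) t ht
  have k2 := key (-1) (Or.inr rfl) t ht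
  rw [abs_le]
  constructor <;> linarith


private lemma bound_on_compact {g : ℝ → ℝ} (hg : Continuous g) (a b : ℝ) :
    ∃ M, 0 ≤ M ∧ ∀ t ∈ Icc a b, |g t| ≤ M := by
  obtain ⟨M, hM⟩ := isCompact_Icc.exists_bound_of_continuousOn (hg.continuousOn (s := Icc a b))
  exact ⟨max M 0, le_max_right _ _, fun t ht => le_trans (hM t ht) (le_max_left _ _)⟩

private lemma derivs_smooth {g : ℝ → ℝ} (hg : ContDiff ℝ ((⊤:ℕ∞) : WithTop ℕ∞) g) : ContDiff ℝ ((⊤:ℕ∞) : WithTop ℕ∞) (deriv g) :=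
  (contDiff_infty_iff_deriv.mp hg).2

private lemma quad_bound {g : ℝ → ℝ} (hg : ContDiff ℝ ((⊤:ℕ∞) : WithTop ℕ∞) g) {a b c : ℝ} (hc : c ∈ Icc a b)
    (h0 : g c = 0) (h1 : deriv g c = 0) :
    ∃ M, 0 ≤ M ∧ ∀ z ∈ Icc a b, |g z| ≤ M * (z - c) ^ 2 ∧ |deriv g z| ≤ M * |z - c| := by
  obtain ⟨M, hM0, hM⟩ := bound_on_compact (derivs_smooth (derivs_smooth hg)).continuous a b
  refine ⟨M, hM0, fun z hz => ?_⟩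
  have hd1 : Differentiable ℝ (deriv g) := (derivs_smooth hg).differentiable (by simp)
  have hg1 : Differentiable ℝ g := hg.differentiable (by simp)
  have hlip : ∀ z ∈ Icc a b, |deriv g z| ≤ M * |z - c| := by
    intro z hz
    have := (convex_Icc a b).norm_image_sub_le_of_norm_deriv_le (f := deriv g)
      (fun x _ => hd1 x) (fun x hx => by simpa [Real.norm_eq_abs] using hM x hx) hc hz
    simpa [h1, Real.norm_eq_abs] using this
  refine ⟨?_, hlip z hz⟩
  rcases le_total c z with h | h
  · have hb : ∀ t ∈ Icc c b, |deriv g t| ≤ M * (t - c) ^ 1 := by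
      intro t ht
      have ht' : t ∈ Icc a b := ⟨hc.1.trans ht.1, ht.2⟩
      have := hlip t ht'
      rw [abs_of_nonneg (sub_nonneg.mpr ht.1)] at this
      simpa [pow_one] using this
    have := poly_bound_right hg1 h0 hM0 hb z ⟨h, hz.2⟩
    have h2 : (z - c) ^ (1 + 1) = (z - c) ^ 2 := by norm_num
    rwa [h2] at this
  · have hb : ∀ t ∈ Icc a c, |deriv g t| ≤ M * (c - t) ^ 1 := by
      intro t ht
      have ht' : t ∈ Icc a b := ⟨ht.1, ht.2.trans hc.2⟩
      have := hlip t ht'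
      rw [abs_of_nonpos (sub_nonpos.mpr ht.2), neg_sub] at this
      simpa [pow_one] using this
    have := poly_bound_left hg1 h0 hM0 hb z ⟨hz.1, h⟩
    have h2 : M * (c - z) ^ (1 + 1) = M * (z - c) ^ 2 := by ring
    rwa [h2] at this

private lemma cubic_bound {g : ℝ → ℝ} (hg : ContDiff ℝ ((⊤:ℕ∞) : WithTop ℕ∞) g) {a b : ℝ}
    (h0 : g a = 0) (h1 : deriv g a = 0) (h2 : deriv (deriv g) a = 0) :
    ∃ M, 0 ≤ M ∧ ∀ z ∈ Icc a b, |g z| ≤ M * (z - a) ^ 3 := by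
  obtain ⟨M, hM0, hM⟩ := bound_on_compact
    (derivs_smooth (derivs_smooth (derivs_smooth hg))).continuous a b
  refine ⟨M, hM0, fun z hz => ?_⟩
  have hg1 : Differentiable ℝ g := hg.differentiable (by simp)
  have hd1 : Differentiable ℝ (deriv g) := (derivs_smooth hg).differentiable (by simp)
  have hd2 : Differentiable ℝ (deriv (deriv g)) :=
    (derivs_smooth (derivs_smooth hg)).differentiable (by simp)
  have s1 : ∀ t ∈ Icc a b, |deriv (deriv g) t| ≤ M * (t - a) ^ 1 := by
    intro t ht
    have := (convex_Icc a b).norm_image_sub_le_of_norm_deriv_le (f := deriv (deriv g))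
      (fun x _ => hd2 x) (fun x hx => by simpa [Real.norm_eq_abs] using hM x hx)
      (left_mem_Icc.mpr (ht.1.trans ht.2)) ht
    rw [h2, sub_zero, Real.norm_eq_abs, Real.norm_eq_abs,
      abs_of_nonneg (sub_nonneg.mpr ht.1)] at this
    simpa [pow_one] using this
  have s2 := poly_bound_right hd1 h1 hM0 s1
  have s3 := poly_bound_right hg1 h0 hM0 (by norm_num at s2 ⊢; exact s2)
  have := s3 z hz
  norm_num at this
  exact this


private noncomputable def Qseq (W : ℝ → ℝ) : ℕ → (ℝ → ℝ)
  | 0 => deriv W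
  | (j+1) => fun y =>
      deriv (deriv (Qseq W j)) y * (2 * W y) + deriv (Qseq W j) y * deriv W y

/-- Exponential decay at `-∞` of all derivatives of the kink:
for each `k ≥ 1`, `|∂_x^k H(x)| ≤ C_k e^{m x}` for `x ≤ 0`. -/
theorem kink_derivatives_exponential_decay
    (W : ℝ → ℝ) (hW : ContDiff ℝ (⊤ : ℕ∞) W) (hWnonneg : ∀ y, 0 ≤ W y)
    (ω : ℝ) (hz : W ω = 0)
    (m : ℝ) (hm : m = Real.sqrt (iteratedDeriv 2 W ω)) (hmpos : 0 < m)
    (H : ℝ → ℝ) (hmono : StrictMono H)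
    (hODE : ∀ x, HasDerivAt H (Real.sqrt (2 * W (H x))) x)
    (habove : ∀ x, ω < H x)
    (hlim : Tendsto H atBot (nhds ω)) :
    ∀ k : ℕ, 1 ≤ k →
      ∃ C > 0, ∀ x ≤ (0:ℝ), |iteratedDeriv k H x| ≤ C * Real.exp (m * x) := by
  have one_le_inf : (1 : WithTop ℕ∞) ≤ ((⊤:ℕ∞) : WithTop ℕ∞) := by exact_mod_cast (le_top : (1:ℕ∞) ≤ ⊤)
  have hW' : ContDiff ℝ ((⊤:ℕ∞) : WithTop ℕ∞) W := hW.of_le (by simp)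
  have hWd : Differentiable ℝ W := hW'.differentiable (by simp)
  have hWd1 : Differentiable ℝ (deriv W) := (derivs_smooth hW').differentiable (by simp)
  have hHdiff : Differentiable ℝ H := fun x => (hODE x).differentiableAt
  have hHcont : Continuous H := hHdiff.continuous
  have hminderiv : ∀ c, W c = 0 → deriv W c = 0 := by
    intro c hc
    have hloc : IsLocalMin W c :=
      Filter.Eventually.of_forall (fun y => by rw [hc]; exact hWnonneg y)
    exact hloc.deriv_eq_zero
  have hWω' : deriv W ω = 0 := hminderiv ω hz
  -- W is positive along the kink
  have hWpos : ∀ x, 0 < W (H x) := by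
    intro x₀
    rcases lt_or_eq_of_le (hWnonneg (H x₀)) with hgt | heq
    · exact hgt
    exfalso
    obtain ⟨M, hM0, hMb⟩ := quad_bound hW' (c := H x₀) (a := H x₀ - 1) (b := H x₀ + 1)
      (by constructor <;> linarith) heq.symm (hminderiv _ heq.symm)
    have hev : ∀ᶠ y in nhds x₀, H x₀ - 1 < H y :=
      (hHcont.continuousAt (x := x₀)).eventually (eventually_gt_nhds (by linarith))
    obtain ⟨ε, hε, hball⟩ := Metric.eventually_nhds_iff.mp hev
    have hdist : dist (x₀ - ε / 2) x₀ < ε := by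
      rw [Real.dist_eq]
      have h1 : x₀ - ε / 2 - x₀ = -(ε / 2) := by ring
      rw [h1, abs_neg, abs_of_pos (by linarith)]
      linarith
    have hHx₁ : H x₀ - 1 < H (x₀ - ε / 2) := hball hdist
    have hx₁lt : x₀ - ε / 2 < x₀ := by linarith
    have hfb : ∀ x ∈ Icc (x₀ - ε / 2) x₀,
        Real.sqrt (2 * W (H x)) ≤ Real.sqrt (2 * M) * (H x₀ - H x) := by
      intro x hx
      have hHl : H x₀ - 1 < H x := lt_of_lt_of_le hHx₁ (hmono.monotone hx.1)
      have hHu : H x ≤ H x₀ := hmono.monotone hx.2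
      have hmem : H x ∈ Icc (H x₀ - 1) (H x₀ + 1) := ⟨hHl.le, by linarith⟩
      have h1 : W (H x) ≤ M * (H x - H x₀) ^ 2 := le_trans (le_abs_self _) (hMb _ hmem).1
      have h2 : Real.sqrt (2 * W (H x)) ≤ Real.sqrt (2 * M * (H x₀ - H x) ^ 2) :=
        Real.sqrt_le_sqrt (by nlinarith)
      have h3 : Real.sqrt (2 * M * (H x₀ - H x) ^ 2)
          = Real.sqrt (2 * M) * (H x₀ - H x) := by
        rw [show (2 * M * (H x₀ - H x) ^ 2 : ℝ) = (2 * M) * (H x₀ - H x) ^ 2 from by ring,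
          Real.sqrt_mul (by positivity) _, Real.sqrt_sq (by linarith)]
      rw [h3] at h2
      exact h2
    have hφ : MonotoneOn
        (fun x => (H x₀ - H x) * Real.exp (x * Real.sqrt (2 * M)))
        (Icc (x₀ - ε / 2) x₀) := by
      apply monoOn_hasDeriv (convex_Icc _ _)
        (F' := fun x => (0 - Real.sqrt (2 * W (H x))) * Real.exp (x * Real.sqrt (2 * M))
          + (H x₀ - H x) * (Real.exp (x * Real.sqrt (2 * M)) * Real.sqrt (2 * M)))
      · intro x hx
        exact ((hasDerivAt_const x (H x₀)).sub (hODE x)).mul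
          ((hasDerivAt_mul_const (Real.sqrt (2 * M))).exp)
      · intro x hx
        have h1 := hfb x hx
        have h2 := Real.exp_pos (x * Real.sqrt (2 * M))
        nlinarith [mul_le_mul_of_nonneg_right h1 h2.le]
    have hmem₁ : (x₀ - ε / 2) ∈ Icc (x₀ - ε / 2) x₀ := ⟨le_refl _, hx₁lt.le⟩
    have hmem₀ : x₀ ∈ Icc (x₀ - ε / 2) x₀ := ⟨hx₁lt.le, le_refl _⟩
    have hle := hφ hmem₁ hmem₀ hx₁lt.le
    have hstrict : H (x₀ - ε / 2) < H x₀ := hmono hx₁lt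
    have he1 := Real.exp_pos ((x₀ - ε / 2) * Real.sqrt (2 * M))
    simp only [sub_self, zero_mul] at hle
    nlinarith
  -- derivative of x ↦ √(2 W (H x))
  have key : ∀ x, HasDerivAt (fun y => Real.sqrt (2 * W (H y))) (deriv W (H x)) x := by
    intro x
    have hpos : 0 < 2 * W (H x) := by linarith [hWpos x]
    have h2W : HasDerivAt (fun y => 2 * W y) (2 * deriv W (H x)) (H x) :=
      ((hWd (H x)).hasDerivAt).const_mul 2
    have hs : HasDerivAt Real.sqrt (1 / (2 * Real.sqrt (2 * W (H x)))) (2 * W (H x)) :=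
      Real.hasDerivAt_sqrt (ne_of_gt hpos)
    have hcomp := (hs.comp (H x) h2W).comp x (hODE x)
    have hcomp' : HasDerivAt (fun y => Real.sqrt (2 * W (H y)))
        ((1 / (2 * Real.sqrt (2 * W (H x))) * (2 * deriv W (H x))) * Real.sqrt (2 * W (H x)))
        x := hcomp
    have hsq : Real.sqrt (2 * W (H x)) ≠ 0 := (Real.sqrt_pos.mpr hpos).ne'
    convert hcomp' using 1
    have hval : (1 / (2 * Real.sqrt (2 * W (H x))) * (2 * deriv W (H x))) * Real.sqrt (2 * W (H x))
        = deriv W (H x) * (Real.sqrt (2 * W (H x)) * (Real.sqrt (2 * W (H x)))⁻¹) := by ring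
    rw [hval, mul_inv_cancel₀ hsq, mul_one]
  have hd1 : deriv H = fun x => Real.sqrt (2 * W (H x)) := funext fun x => (hODE x).deriv
  -- second derivative data of W at ω
  have hitnn : 0 ≤ iteratedDeriv 2 W ω := by
    by_contra hneg
    push_neg at hneg
    have : m = 0 := by rw [hm]; exact Real.sqrt_eq_zero'.mpr hneg.le
    linarith
  have h2it : iteratedDeriv 2 W = deriv (deriv W) := by
    rw [iteratedDeriv_succ, iteratedDeriv_one]
  have hm2 : deriv (deriv W) ω = m ^ 2 := by
    rw [← h2it, hm, Real.sq_sqrt hitnn]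
  -- cubic Taylor bound for h := 2W - m²(y-ω)²
  have hhsm : ContDiff ℝ ((⊤:ℕ∞) : WithTop ℕ∞) (fun y => 2 * W y - m ^ 2 * (y - ω) ^ 2) :=
    (contDiff_const.mul hW').sub (contDiff_const.mul ((contDiff_id.sub contDiff_const).pow 2))
  have hder1 : deriv (fun y => 2 * W y - m ^ 2 * (y - ω) ^ 2)
      = fun y => 2 * deriv W y - m ^ 2 * (2 * (y - ω)) := by
    funext y
    have h := (((hWd y).hasDerivAt).const_mul 2).sub
      ((((hasDerivAt_id y).sub_const ω).pow 2).const_mul (m ^ 2))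
    simp only [id_eq] at h
    rw [show deriv (fun y => 2 * W y - m ^ 2 * (y - ω) ^ 2) y = _ from h.deriv]
    norm_num
  have hder2 : deriv (fun y => 2 * deriv W y - m ^ 2 * (2 * (y - ω)))
      = fun y => 2 * deriv (deriv W) y - m ^ 2 * 2 := by
    funext y
    have h := (((hWd1 y).hasDerivAt).const_mul 2).sub
      ((((hasDerivAt_id y).sub_const ω).const_mul 2).const_mul (m ^ 2))
    simp only [id_eq] at h
    rw [show deriv (fun y => 2 * deriv W y - m ^ 2 * (2 * (y - ω))) y = _ from h.deriv]
    norm_num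
  obtain ⟨K, hK0, hKb⟩ := cubic_bound (a := ω) (b := ω + 1) hhsm
    (by show 2 * W ω - m ^ 2 * (ω - ω) ^ 2 = 0; rw [hz]; ring)
    (by rw [hder1]; show 2 * deriv W ω - m ^ 2 * (2 * (ω - ω)) = 0; rw [hWω']; ring)
    (by rw [hder1, hder2]; show 2 * deriv (deriv W) ω - m ^ 2 * 2 = 0; rw [hm2]; ring)
  set K1 : ℝ := K + 1 with hK1def
  have hK1 : 0 < K1 := by linarith
  set K2 : ℝ := K1 / m with hK2def
  have hK2 : 0 < K2 := by positivity
  have hK2m : K2 * m = K1 := by rw [hK2def]; exact div_mul_cancel₀ _ hmpos.ne'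
  set δ : ℝ := min 1 (m ^ 2 / (2 * K1)) with hδdef
  have hδpos : 0 < δ := lt_min one_pos (by positivity)
  -- lower bound on the nonlinearity near ω
  have flow : ∀ y, ω < y → y ≤ ω + δ →
      m * (y - ω) - K2 * (y - ω) ^ 2 ≤ Real.sqrt (2 * W y)
      ∧ m / 2 * (y - ω) ≤ m * (y - ω) - K2 * (y - ω) ^ 2 := by
    intro y hy1 hy2
    have ht0 : 0 < y - ω := by linarith
    have htδ : y - ω ≤ δ := by linarith
    have ht1 : y - ω ≤ 1 := le_trans htδ (min_le_left _ _)
    have ht2 : y - ω ≤ m ^ 2 / (2 * K1) := le_trans htδ (min_le_right _ _)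
    have ht2' : (y - ω) * (2 * K1) ≤ m ^ 2 := (le_div_iff₀ (by positivity)).mp ht2
    have hK2t : K2 * (y - ω) ≤ m / 2 := by
      have hKm : K2 * (y - ω) * (2 * K1) ≤ K2 * m ^ 2 := by nlinarith
      rw [hK2def] at hKm ⊢
      rw [div_mul_eq_mul_div, div_le_div_iff₀ hmpos (by norm_num : (0:ℝ) < 2)] at *
      nlinarith [hK2m]
    have hsecond : m / 2 * (y - ω) ≤ m * (y - ω) - K2 * (y - ω) ^ 2 := by nlinarith
    refine ⟨?_, hsecond⟩
    have hcb := hKb y ⟨hy1.le, by linarith⟩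
    have habs := abs_le.mp hcb
    have hlb : m ^ 2 * (y - ω) ^ 2 - K1 * (y - ω) ^ 3 ≤ 2 * W y := by
      nlinarith [pow_pos ht0 3]
    have hqnn : 0 ≤ m * (y - ω) - K2 * (y - ω) ^ 2 := by nlinarith
    apply (Real.le_sqrt hqnn (by linarith [hWnonneg y])).mpr
    nlinarith [hlb, hK2m,
      mul_le_mul_of_nonneg_left hK2t (mul_nonneg hK2.le (pow_nonneg ht0.le 3)),
      mul_nonneg hK2.le (pow_nonneg ht0.le 3)]
  -- threshold point
  have hev : ∀ᶠ x in atBot, H x < ω + δ := hlim.eventually (eventually_lt_nhds (by linarith))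
  obtain ⟨A, hA⟩ := eventually_atBot.mp hev
  set X₀ : ℝ := min A 0 with hX₀def
  have hX₀0 : X₀ ≤ 0 := min_le_right _ _
  have hHX₀ : ∀ x ≤ X₀, H x ≤ ω + δ := fun x hx =>
    (hA x (le_trans hx (min_le_left _ _))).le
  -- phase 1 : crude decay at rate m/2
  have hmono1 : MonotoneOn (fun x => (H x - ω) * Real.exp (x * (-(m / 2)))) (Iic X₀) := by
    apply monoOn_hasDeriv (convex_Iic X₀)
      (F' := fun x => Real.sqrt (2 * W (H x)) * Real.exp (x * (-(m / 2)))
        + (H x - ω) * (Real.exp (x * (-(m / 2))) * (-(m / 2))))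
    · intro x hx
      exact ((hODE x).sub_const ω).mul ((hasDerivAt_mul_const (-(m / 2))).exp)
    · intro x hx
      have hy1 := habove x
      have hy2 := hHX₀ x hx
      obtain ⟨hf1, hf2⟩ := flow (H x) hy1 hy2
      have hE := Real.exp_pos (x * (-(m / 2)))
      nlinarith [mul_le_mul_of_nonneg_right (le_trans hf2 hf1) hE.le]
  set C₁ : ℝ := (H X₀ - ω) * Real.exp (X₀ * (-(m / 2))) with hC₁def
  have hC₁pos : 0 < C₁ := mul_pos (by linarith [habove X₀]) (Real.exp_pos _)
  have phase1 : ∀ x ≤ X₀, H x - ω ≤ C₁ * Real.exp (x * (m / 2)) := by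
    intro x hx
    have hle := hmono1 (mem_Iic.mpr hx) (mem_Iic.mpr (le_refl X₀)) hx
    have hexp : Real.exp (x * (-(m / 2))) * Real.exp (x * (m / 2)) = 1 := by
      rw [← Real.exp_add]
      norm_num
    calc H x - ω = (H x - ω) * Real.exp (x * (-(m / 2))) * Real.exp (x * (m / 2)) := by
          rw [mul_assoc, hexp, mul_one]
      _ ≤ C₁ * Real.exp (x * (m / 2)) :=
          mul_le_mul_of_nonneg_right hle (Real.exp_pos _).le
  -- phase 2 : sharp decay at rate m
  set a : ℝ := 2 * K2 * C₁ / m with hadef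
  have hapos : 0 < a := by positivity
  have haμ : a * (m / 2) = K2 * C₁ := by
    rw [hadef]; field_simp
  have hmono2 : MonotoneOn
      (fun x => (H x - ω) * Real.exp (x * (-m) + a * Real.exp (x * (m / 2)))) (Iic X₀) := by
    apply monoOn_hasDeriv (convex_Iic X₀)
      (F' := fun x => Real.sqrt (2 * W (H x)) * Real.exp (x * (-m) + a * Real.exp (x * (m / 2)))
        + (H x - ω) * (Real.exp (x * (-m) + a * Real.exp (x * (m / 2)))
            * (-m + a * (Real.exp (x * (m / 2)) * (m / 2)))))
    · intro x hx
      exact ((hODE x).sub_const ω).mul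
        (((hasDerivAt_mul_const (-m)).add
          (((hasDerivAt_mul_const (m / 2)).exp).const_mul a)).exp)
    · intro x hx
      have hy1 := habove x
      have hy2 := hHX₀ x hx
      obtain ⟨hf1, _⟩ := flow (H x) hy1 hy2
      have hu1 := phase1 x hx
      have hE := Real.exp_pos (x * (-m) + a * Real.exp (x * (m / 2)))
      have he := Real.exp_pos (x * (m / 2))
      have hu0 : 0 < H x - ω := by linarith
      have key2 : 0 ≤ Real.sqrt (2 * W (H x))
          + (H x - ω) * (-m + a * (Real.exp (x * (m / 2)) * (m / 2))) := by
        have h1 : a * (Real.exp (x * (m / 2)) * (m / 2))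
            = K2 * C₁ * Real.exp (x * (m / 2)) := by
          rw [← haμ]; ring
        rw [h1]
        nlinarith [mul_le_mul_of_nonneg_left hu1 (mul_nonneg hK2.le hu0.le)]
      nlinarith [mul_nonneg key2 hE.le]
  set vX₀ : ℝ := (H X₀ - ω) * Real.exp (X₀ * (-m) + a * Real.exp (X₀ * (m / 2))) with hvdef
  have hvpos : 0 < vX₀ := mul_pos (by linarith [habove X₀]) (Real.exp_pos _)
  have phase2 : ∀ x ≤ X₀, H x - ω ≤ vX₀ * Real.exp (x * m) := by
    intro x hx
    have h1 := hmono2 (mem_Iic.mpr hx) (mem_Iic.mpr (le_refl X₀)) hx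
    have hge1 : 1 ≤ Real.exp (a * Real.exp (x * (m / 2))) :=
      Real.one_le_exp (by positivity)
    have hu0 : 0 ≤ H x - ω := by linarith [habove x]
    have h2 : (H x - ω) * Real.exp (x * (-m)) ≤ vX₀ := by
      calc (H x - ω) * Real.exp (x * (-m))
          ≤ (H x - ω) * Real.exp (x * (-m)) * Real.exp (a * Real.exp (x * (m / 2))) :=
            le_mul_of_one_le_right (by positivity) hge1
        _ = (H x - ω) * Real.exp (x * (-m) + a * Real.exp (x * (m / 2))) := by
            rw [Real.exp_add]; ring
        _ ≤ vX₀ := h1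
    have h3 : x * (-m) + x * m = 0 := by ring
    calc H x - ω = (H x - ω) * Real.exp (x * (-m)) * Real.exp (x * m) := by
          rw [mul_assoc, ← Real.exp_add, h3, Real.exp_zero, mul_one]
      _ ≤ vX₀ * Real.exp (x * m) := mul_le_mul_of_nonneg_right h2 (Real.exp_pos _).le
  set C₀ : ℝ := max vX₀ ((H 0 - ω) * Real.exp (X₀ * (-m))) with hC₀def
  have hC₀pos : 0 < C₀ := lt_of_lt_of_le hvpos (le_max_left _ _)
  have decay0 : ∀ x ≤ (0:ℝ), H x - ω ≤ C₀ * Real.exp (x * m) := by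
    intro x hx
    rcases le_or_gt x X₀ with h | h
    · exact le_trans (phase2 x h)
        (mul_le_mul_of_nonneg_right (le_max_left _ _) (Real.exp_pos _).le)
    · have h1 : H x ≤ H 0 := hmono.monotone hx
      have hone : 1 ≤ Real.exp (X₀ * (-m)) * Real.exp (x * m) := by
        rw [← Real.exp_add]
        apply Real.one_le_exp
        nlinarith
      calc H x - ω ≤ H 0 - ω := by linarith
        _ ≤ (H 0 - ω) * (Real.exp (X₀ * (-m)) * Real.exp (x * m)) :=
            le_mul_of_one_le_right (by linarith [habove 0]) hone
        _ = ((H 0 - ω) * Real.exp (X₀ * (-m))) * Real.exp (x * m) := by ring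
        _ ≤ C₀ * Real.exp (x * m) :=
            mul_le_mul_of_nonneg_right (le_max_right _ _) (Real.exp_pos _).le
  -- upper bound on the nonlinearity : k = 1 decay
  obtain ⟨M₂, hM₂0, hM₂b⟩ := quad_bound hW' (c := ω) (a := ω) (b := H 0)
    (left_mem_Icc.mpr (habove 0).le) hz hWω'
  have hk1 : ∀ x ≤ (0:ℝ),
      Real.sqrt (2 * W (H x)) ≤ Real.sqrt (2 * M₂) * (C₀ * Real.exp (x * m)) := by
    intro x hx
    have hmem : H x ∈ Icc ω (H 0) := ⟨(habove x).le, hmono.monotone hx⟩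
    have h1 : W (H x) ≤ M₂ * (H x - ω) ^ 2 := le_trans (le_abs_self _) (hM₂b _ hmem).1
    have h2 : Real.sqrt (2 * W (H x)) ≤ Real.sqrt (2 * M₂) * (H x - ω) := by
      have h2a : Real.sqrt (2 * W (H x)) ≤ Real.sqrt ((2 * M₂) * (H x - ω) ^ 2) :=
        Real.sqrt_le_sqrt (by nlinarith)
      rwa [Real.sqrt_mul (show (0:ℝ) ≤ 2 * M₂ by positivity) ((H x - ω) ^ 2),
        Real.sqrt_sq (show (0:ℝ) ≤ H x - ω by linarith [habove x])] at h2a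
    have h3 := decay0 x hx
    calc Real.sqrt (2 * W (H x)) ≤ Real.sqrt (2 * M₂) * (H x - ω) := h2
      _ ≤ Real.sqrt (2 * M₂) * (C₀ * Real.exp (x * m)) :=
          mul_le_mul_of_nonneg_left h3 (Real.sqrt_nonneg _)
  -- smoothness and vanishing of the auxiliary sequence
  have hQsm : ∀ j, ContDiff ℝ ((⊤:ℕ∞) : WithTop ℕ∞) (Qseq W j) := by
    intro j
    induction j with
    | zero => exact derivs_smooth hW'
    | succ j ih =>
      show ContDiff ℝ ((⊤:ℕ∞) : WithTop ℕ∞) (fun y =>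
        deriv (deriv (Qseq W j)) y * (2 * W y) + deriv (Qseq W j) y * deriv W y)
      exact (((derivs_smooth (derivs_smooth ih))).mul (contDiff_const.mul hW')).add
        ((derivs_smooth ih).mul (derivs_smooth hW'))
  have hQω : ∀ j, Qseq W j ω = 0 := by
    intro j
    cases j with
    | zero => exact hWω'
    | succ j =>
      show deriv (deriv (Qseq W j)) ω * (2 * W ω) + deriv (Qseq W j) ω * deriv W ω = 0
      rw [hz, hWω']
      ring
  have hQd : ∀ j y, DifferentiableAt ℝ (Qseq W j) y :=
    fun j y => ((hQsm j).differentiable (by simp)) y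
  have hQd' : ∀ j y, DifferentiableAt ℝ (deriv (Qseq W j)) y :=
    fun j y => ((derivs_smooth (hQsm j)).differentiable (by simp)) y
  -- structure of the iterated derivatives
  have hform : ∀ j : ℕ,
      (∀ x, iteratedDeriv (2 * j + 2) H x = Qseq W j (H x)) ∧
      (∀ x, iteratedDeriv (2 * j + 3) H x
        = deriv (Qseq W j) (H x) * Real.sqrt (2 * W (H x))) := by
    intro j
    induction j with
    | zero =>
      have he : ∀ x, iteratedDeriv (2 * 0 + 2) H x = Qseq W 0 (H x) := by
        intro x
        have hidx : (2 * 0 + 2 : ℕ) = 1 + 1 := by norm_num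
        rw [hidx, iteratedDeriv_succ, iteratedDeriv_one, hd1, (key x).deriv]
        rfl
      refine ⟨he, ?_⟩
      intro x
      have hidx : (2 * 0 + 3 : ℕ) = (2 * 0 + 2) + 1 := by norm_num
      rw [hidx, iteratedDeriv_succ, funext he]
      exact (((hQd 0 (H x)).hasDerivAt).comp x (hODE x)).deriv
    | succ j ih =>
      obtain ⟨ihe, iho⟩ := ih
      have heven : ∀ x, iteratedDeriv (2 * (j + 1) + 2) H x = Qseq W (j + 1) (H x) := by
        intro x
        have hidx : (2 * (j + 1) + 2 : ℕ) = (2 * j + 3) + 1 := by ring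
        rw [hidx, iteratedDeriv_succ, funext iho]
        have hprod : HasDerivAt
            (fun x => deriv (Qseq W j) (H x) * Real.sqrt (2 * W (H x)))
            ((deriv (deriv (Qseq W j)) (H x) * Real.sqrt (2 * W (H x)))
                * Real.sqrt (2 * W (H x))
              + deriv (Qseq W j) (H x) * deriv W (H x)) x :=
          (((hQd' j (H x)).hasDerivAt).comp x (hODE x)).mul (key x)
        rw [hprod.deriv]
        have hs : Real.sqrt (2 * W (H x)) * Real.sqrt (2 * W (H x)) = 2 * W (H x) :=
          Real.mul_self_sqrt (by linarith [hWnonneg (H x)])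
        show _ = deriv (deriv (Qseq W j)) (H x) * (2 * W (H x))
          + deriv (Qseq W j) (H x) * deriv W (H x)
        rw [mul_assoc, hs]
      refine ⟨heven, ?_⟩
      intro x
      have hidx : (2 * (j + 1) + 3 : ℕ) = (2 * (j + 1) + 2) + 1 := by ring
      rw [hidx, iteratedDeriv_succ, funext heven]
      exact (((hQd (j + 1) (H x)).hasDerivAt).comp x (hODE x)).deriv
  -- final assembly
  intro k hk
  obtain ⟨n, rfl⟩ : ∃ n, k = n + 1 := ⟨k - 1, by omega⟩
  rcases n with _ | n
  · -- k = 1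
    refine ⟨Real.sqrt (2 * M₂) * C₀ + 1, ?_, fun x hx => ?_⟩
    · nlinarith [mul_nonneg (Real.sqrt_nonneg (2 * M₂)) hC₀pos.le]
    · have h1 : iteratedDeriv (0 + 1) H x = Real.sqrt (2 * W (H x)) := by
        rw [show (0 + 1 : ℕ) = 1 from rfl, iteratedDeriv_one, hd1]
      rw [h1, abs_of_nonneg (Real.sqrt_nonneg _), mul_comm m x]
      have := hk1 x hx
      nlinarith [Real.exp_pos (x * m)]
  · -- k = n + 2
    rcases Nat.even_or_odd n with ⟨j, hj⟩ | ⟨j, hj⟩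
    · -- k = 2j + 2
      have hkk : (n + 1 + 1 : ℕ) = 2 * j + 2 := by omega
      obtain ⟨L, hL0, hLb⟩ := bound_on_compact ((derivs_smooth (hQsm j)).continuous) ω (H 0)
      refine ⟨L * C₀ + 1, ?_, fun x hx => ?_⟩
      · nlinarith [mul_nonneg hL0 hC₀pos.le]
      · rw [hkk, (hform j).1 x]
        have hmem : H x ∈ Icc ω (H 0) := ⟨(habove x).le, hmono.monotone hx⟩
        have hωmem : ω ∈ Icc ω (H 0) := left_mem_Icc.mpr (habove 0).le
        have hlip := (convex_Icc ω (H 0)).norm_image_sub_le_of_norm_deriv_le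
          (f := Qseq W j) (fun z _ => hQd j z)
          (fun z hz' => by simpa [Real.norm_eq_abs] using hLb z hz') hωmem hmem
        rw [hQω j, sub_zero, Real.norm_eq_abs, Real.norm_eq_abs,
          abs_of_nonneg (by linarith [habove x] : (0:ℝ) ≤ H x - ω)] at hlip
        have h3 := decay0 x hx
        have hE := (Real.exp_pos (x * m)).le
        calc |Qseq W j (H x)| ≤ L * (H x - ω) := hlip
          _ ≤ L * (C₀ * Real.exp (x * m)) := mul_le_mul_of_nonneg_left h3 hL0
          _ ≤ (L * C₀ + 1) * Real.exp (m * x) := by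
              rw [mul_comm m x]
              nlinarith [Real.exp_pos (x * m)]
    · -- k = 2j + 3
      have hkk : (n + 1 + 1 : ℕ) = 2 * j + 3 := by omega
      obtain ⟨L, hL0, hLb⟩ := bound_on_compact ((derivs_smooth (hQsm j)).continuous) ω (H 0)
      refine ⟨L * (Real.sqrt (2 * M₂) * C₀) + 1, ?_, fun x hx => ?_⟩
      · nlinarith [mul_nonneg hL0 (mul_nonneg (Real.sqrt_nonneg (2 * M₂)) hC₀pos.le)]
      · rw [hkk, (hform j).2 x]
        have hmem : H x ∈ Icc ω (H 0) := ⟨(habove x).le, hmono.monotone hx⟩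
        have h1 := hLb (H x) hmem
        have h2 := hk1 x hx
        calc |deriv (Qseq W j) (H x) * Real.sqrt (2 * W (H x))|
            = |deriv (Qseq W j) (H x)| * Real.sqrt (2 * W (H x)) := by
              rw [abs_mul, abs_of_nonneg (Real.sqrt_nonneg _)]
          _ ≤ L * (Real.sqrt (2 * M₂) * (C₀ * Real.exp (x * m))) :=
              mul_le_mul h1 h2 (Real.sqrt_nonneg _) hL0
          _ ≤ (L * (Real.sqrt (2 * M₂) * C₀) + 1) * Real.exp (m * x) := by
              rw [mul_comm m x,
                show L * (Real.sqrt (2 * M₂) * (C₀ * Real.exp (x * m)))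
                  = (L * (Real.sqrt (2 * M₂) * C₀)) * Real.exp (x * m) from by ring]
              exact mul_le_mul_of_nonneg_right (by linarith) (Real.exp_pos (x * m)).le
end

section
/- Let W be C^∞ with W ≥ 0. If ψ : ℝ → ℝ is a C² solution of ψ''(x) = W'(ψ(x)) with finite potential energy E_p(ψ) = ∫_ℝ((1/2)(ψ')² + W(ψ)) dx < ∞, then (1/2)(ψ'(x))² = W(ψ(x)) for all x ∈ ℝ. -/
open Real MeasureTheory

/-- For a finite-energy stationary solution of `ψ'' = W'(ψ)`, the conserved
quantity `(1/2)(ψ')² − W(ψ)` vanishes identically (Bogomolny equations). -/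
theorem stationary_zero_energy_constant
    (W : ℝ → ℝ) (hW : ContDiff ℝ (⊤ : ℕ∞) W) (hWnonneg : ∀ y, 0 ≤ W y)
    (ψ : ℝ → ℝ) (hψ : ContDiff ℝ 2 ψ)
    (hODE : ∀ x, iteratedDeriv 2 ψ x = deriv W (ψ x))
    (hE : Integrable (fun x => (1/2) * (deriv ψ x)^2 + W (ψ x))) :
    ∀ x, (1/2) * (deriv ψ x)^2 = W (ψ x) := by
  -- differentiability facts
  have hψ' : Differentiable ℝ ψ := hψ.differentiable (by norm_num)
  have h2 : ContDiff ℝ (1+1) ψ := by norm_num at hψ ⊢; exact hψ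
  have hderiv : ContDiff ℝ 1 (deriv ψ) := (contDiff_succ_iff_deriv.mp h2).2.2
  have hderiv' : Differentiable ℝ (deriv ψ) := hderiv.differentiable one_ne_zero
  have hWdiff : Differentiable ℝ W := hW.differentiable (by simp)
  -- the conserved quantity
  set E : ℝ → ℝ := fun x => (1/2) * (deriv ψ x)^2 - W (ψ x) with hEdef
  have hEderiv : ∀ x, HasDerivAt E 0 x := by
    intro x
    have h1 : HasDerivAt ψ (deriv ψ x) x := (hψ' x).hasDerivAt
    have h2' : HasDerivAt (deriv ψ) (deriv (deriv ψ) x) x := (hderiv' x).hasDerivAt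
    have h3 : HasDerivAt W (deriv W (ψ x)) (ψ x) := (hWdiff (ψ x)).hasDerivAt
    have h4 : HasDerivAt (fun y => W (ψ y)) (deriv W (ψ x) * deriv ψ x) x :=
      h3.comp x h1
    have h5 := ((h2'.pow 2).const_mul (1/2 : ℝ))
    have h6 := h5.sub h4
    have hode : deriv (deriv ψ) x = deriv W (ψ x) := by
      have := hODE x
      rwa [iteratedDeriv_succ, iteratedDeriv_one] at this
    refine h6.congr_deriv ?_
    rw [hode]; push_cast; ring
  have hEdiff : Differentiable ℝ E := fun x => (hEderiv x).differentiableAt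
  have hconst : ∀ x, E x = E 0 := by
    intro x
    exact is_const_of_deriv_eq_zero hEdiff (fun y => (hEderiv y).deriv) x 0
  set c : ℝ := E 0 with hc
  -- the integrand dominates |c|
  have hbound : ∀ x, |c| ≤ (1/2) * (deriv ψ x)^2 + W (ψ x) := by
    intro x
    have hEx : (1/2) * (deriv ψ x)^2 - W (ψ x) = c := hconst x
    have h1 : 0 ≤ (1/2) * (deriv ψ x)^2 := by positivity
    have h2 : 0 ≤ W (ψ x) := hWnonneg _
    rcases abs_cases c with ⟨h, _⟩ | ⟨h, _⟩ <;> rw [h] <;> nlinarith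
  -- so the constant |c| is integrable over ℝ, forcing c = 0
  have hcint : Integrable (fun _ : ℝ => |c|) := by
    refine hE.mono' aestronglyMeasurable_const ?_
    filter_upwards with x
    simpa [Real.norm_eq_abs, abs_abs] using hbound x
  have hc0 : c = 0 := by
    rcases (integrable_const_iff.mp hcint) with h | h
    · exact abs_eq_zero.mp h
    · exact absurd h.measure_univ_lt_top (by simp [Real.volume_univ])
  intro x
  have h : (1/2) * (deriv ψ x)^2 - W (ψ x) = 0 := by rw [← hc0]; exact hconst x
  linarith
end

section
/- Let W be C^∞ satisfying W ≥ 0, Ω = W⁻¹(0) with no accumulation points, W'' > 0 on Ω, and ∫₀^∞√W = ∫_{−∞}^0 √W = ∞. Then every finite-energy stationary solution ψ of ψ'' = W'(ψ) is either a constant equal to some ω ∈ Ω, or a translate of a kink H_{n,n+1}(· − a), or a translate of an antikink H_{n+1,n}(· − a), where H_{n,n+1} connects two consecutive zeros ω_n < ω_{n+1} of W and H_{n+1,n}(x) = H_{n,n+1}(−x). -/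
open Real Filter MeasureTheory

section AuxClassification
open Set


lemma forward_zero (f f' : ℝ → ℝ) (K δ : ℝ) (hδ : 0 < δ)
    (hd : ∀ x, HasDerivAt f (f' x) x)
    (hb : ∀ x, |f x| ≤ δ → |f' x| ≤ K * |f x|)
    (x₀ : ℝ) (h0 : f x₀ = 0) : ∀ x, x₀ ≤ x → f x = 0 := by
  intro b hb0
  have hfc : Continuous f := Differentiable.continuous (fun x => (hd x).differentiableAt)
  set S : Set ℝ := {t ∈ Icc x₀ b | ∀ s ∈ Icc x₀ t, f s = 0} with hS
  have hx₀S : x₀ ∈ S := ⟨⟨le_refl _, hb0⟩, fun s hs => by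
    rw [le_antisymm hs.2 hs.1]; exact h0⟩
  have hne : S.Nonempty := ⟨x₀, hx₀S⟩
  have hbdd : BddAbove S := ⟨b, fun t ht => ht.1.2⟩
  set T := sSup S with hT
  have hTmem : T ∈ Icc x₀ b := ⟨le_csSup hbdd hx₀S, csSup_le hne fun t ht => ht.1.2⟩
  have hzero : ∀ s ∈ Icc x₀ T, f s = 0 := by
    intro s hs
    rcases eq_or_lt_of_le hs.2 with heq | hlt
    · -- s = T : closure argument
      rcases eq_or_lt_of_le hs.1 with heq' | hlt'
      · rw [← heq']; exact h0
      · have hsub : Ico x₀ s ⊆ f ⁻¹' {0} := by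
          intro u hu
          have hu2 : u < T := heq ▸ hu.2
          obtain ⟨t, htS, hut⟩ := exists_lt_of_lt_csSup hne hu2
          exact htS.2 u ⟨hu.1, le_of_lt hut⟩
        have hcl : s ∈ closure (Ico x₀ s) := by
          rw [closure_Ico (ne_of_lt hlt')]; exact ⟨le_of_lt hlt', le_refl _⟩
        have := closure_mono hsub hcl
        rwa [(isClosed_singleton.preimage hfc).closure_eq] at this
    · obtain ⟨t, htS, hut⟩ := exists_lt_of_lt_csSup hne hlt
      exact htS.2 s ⟨hs.1, le_of_lt hut⟩
  have hfT : f T = 0 := hzero T ⟨hTmem.1, le_refl _⟩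
  rcases eq_or_lt_of_le hTmem.2 with heq | hlt
  · exact heq ▸ hfT
  · -- T < b : contradiction
    exfalso
    have hcont : ContinuousAt f T := (hd T).continuousAt
    have : ∀ᶠ y in nhds T, |f y| < δ := by
      have := hcont.tendsto
      rw [hfT] at this
      have := this (Metric.ball_mem_nhds 0 hδ)
      filter_upwards [this] with y hy
      simpa [Real.dist_eq] using hy
    obtain ⟨ε, hε, hball⟩ := Metric.eventually_nhds_iff.mp this
    set b' := min (T + ε/2) b with hb'
    have hTb' : T < b' := lt_min (by linarith) hlt
    have hsmall : ∀ s ∈ Icc T b', |f s| ≤ δ := by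
      intro s hs
      have : dist s T < ε := by
        rw [Real.dist_eq, abs_of_nonneg (by linarith [hs.1])]
        have := hs.2
        have : s ≤ T + ε/2 := le_trans this (min_le_left _ _)
        linarith
      exact le_of_lt (hball this)
    have hgron := norm_le_gronwallBound_of_norm_deriv_right_le
      (f := f) (f' := f') (δ := 0) (K := K) (ε := 0) (a := T) (b := b')
      hfc.continuousOn
      (fun x _ => (hd x).hasDerivWithinAt)
      (by simp [hfT])
      (fun x hx => by
        rw [add_zero]
        exact hb x (hsmall x ⟨hx.1, le_of_lt hx.2⟩))
    have hzb' : ∀ s ∈ Icc T b', f s = 0 := by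
      intro s hs
      have := hgron s hs
      rw [gronwallBound_ε0, zero_mul] at this
      exact abs_eq_zero.mp (le_antisymm (by simpa using this) (abs_nonneg _))
    have hb'S : b' ∈ S := by
      refine ⟨⟨le_trans hTmem.1 (le_of_lt hTb'), min_le_right _ _⟩, fun s hs => ?_⟩
      rcases le_total s T with h | h
      · exact hzero s ⟨hs.1, h⟩
      · exact hzb' s ⟨h, hs.2⟩
    exact absurd (le_csSup hbdd hb'S) (not_le.mpr hTb')


section helpers
lemma abs_le_of_mem_uIcc {ω y z : ℝ} (hz : z ∈ Set.uIcc ω y) : |z - ω| ≤ |y - ω| := by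
  rcases le_total ω y with h | h
  · rw [Set.uIcc_of_le h] at hz
    rw [abs_of_nonneg (by linarith [hz.1]), abs_of_nonneg (by linarith)]
    linarith [hz.2]
  · rw [Set.uIcc_of_ge h] at hz
    rw [abs_of_nonpos (by linarith [hz.2]), abs_of_nonpos (by linarith)]
    linarith [hz.1]
end helpers

-- quadratic bound near a critical zero of W
lemma quad_bound_s7 (W : ℝ → ℝ) (hW : ContDiff ℝ (⊤ : ℕ∞) W) (hWnonneg : ∀ y, 0 ≤ W y)
    (ω : ℝ) (hω : W ω = 0) :
    ∃ M : ℝ, 0 ≤ M ∧ ∀ y, |y - ω| ≤ 1 → W y ≤ M * (y - ω)^2 := by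
  have hWi : ContDiff ℝ ((⊤:ℕ∞) : WithTop ℕ∞) W := hW.of_le (by simp)
  obtain ⟨hWd, hW'⟩ := contDiff_infty_iff_deriv.mp hWi
  obtain ⟨hW'd, hW''⟩ := contDiff_infty_iff_deriv.mp hW'
  have hmin : deriv W ω = 0 := by
    have : IsLocalMin W ω := by
      apply IsMinOn.isLocalMin (s := Set.univ)
      · intro y _
        rw [hω]; exact hWnonneg y
      · exact Filter.univ_mem
    exact this.deriv_eq_zero
  obtain ⟨M0, hM0⟩ := (isCompact_Icc (a := ω - 1) (b := ω + 1)).exists_bound_of_continuousOn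
    (hW''.continuous.continuousOn (s := Set.Icc (ω-1) (ω+1)))
  set M := max M0 0 with hM
  have hMn : 0 ≤ M := le_max_right _ _
  have hbd : ∀ z ∈ Set.Icc (ω-1) (ω+1), ‖deriv (deriv W) z‖ ≤ M :=
    fun z hz => le_trans (hM0 z hz) (le_max_left _ _)
  have hW'bd : ∀ y ∈ Set.Icc (ω-1) (ω+1), |deriv W y| ≤ M * |y - ω| := by
    intro y hy
    have hωmem : ω ∈ Set.Icc (ω-1) (ω+1) := by constructor <;> linarith
    have := (convex_Icc (ω-1) (ω+1)).norm_image_sub_le_of_norm_hasDerivWithin_le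
      (f := deriv W) (f' := deriv (deriv W))
      (fun z hz => (hW'd z).hasDerivAt.hasDerivWithinAt) hbd hωmem hy
    rw [hmin, sub_zero] at this
    simpa [Real.norm_eq_abs] using this
  refine ⟨M, hMn, fun y hy => ?_⟩
  have hymem : y ∈ Set.Icc (ω-1) (ω+1) := by
    rw [abs_le] at hy; constructor <;> linarith [hy.1, hy.2]
  have hωmem : ω ∈ Set.Icc (ω-1) (ω+1) := by constructor <;> linarith
  have hsub : Set.uIcc ω y ⊆ Set.Icc (ω-1) (ω+1) := Set.uIcc_subset_Icc hωmem hymem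
  have := (convex_uIcc ω y).norm_image_sub_le_of_norm_hasDerivWithin_le
    (f := W) (f' := deriv W)
    (fun z hz => (hWd z).hasDerivAt.hasDerivWithinAt)
    (fun z hz => by
      rw [Real.norm_eq_abs]
      exact le_trans (hW'bd z (hsub hz))
        (mul_le_mul_of_nonneg_left (abs_le_of_mem_uIcc hz) hMn))
    Set.left_mem_uIcc Set.right_mem_uIcc
  rw [hω, sub_zero, Real.norm_eq_abs, Real.norm_eq_abs,
    abs_of_nonneg (hWnonneg y)] at this
  calc W y ≤ M * |y - ω| * |y - ω| := this
    _ = M * (y - ω)^2 := by rw [mul_assoc, ← abs_mul, ← sq, abs_of_nonneg (sq_nonneg _)]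


lemma kink_case (W : ℝ → ℝ) (hWc : Continuous W) (hWnonneg : ∀ y, 0 ≤ W y)
    (hdivTop : ¬ IntegrableOn (fun y => Real.sqrt (W y)) (Set.Ici 0))
    (hdivBot : ¬ IntegrableOn (fun y => Real.sqrt (W y)) (Set.Iic 0))
    (ψ : ℝ → ℝ) (hdiff : Differentiable ℝ ψ) (hd'c : Continuous (deriv ψ))
    (hpos : ∀ x, 0 < deriv ψ x) (hBog : ∀ x, (deriv ψ x)^2 = 2 * W (ψ x))
    (hE : Integrable (fun x => (1/2) * (deriv ψ x)^2 + W (ψ x))) :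
    ∃ ω₁ ω₂, W ω₁ = 0 ∧ W ω₂ = 0 ∧ ω₁ < ω₂ ∧ (∀ y ∈ Set.Ioo ω₁ ω₂, 0 < W y) ∧
      (∀ x, deriv ψ x = Real.sqrt (2 * W (ψ x))) ∧
      Tendsto ψ atBot (nhds ω₁) ∧ Tendsto ψ atTop (nhds ω₂) := by
  set g : ℝ → ℝ := fun x => (1/2) * (deriv ψ x)^2 + W (ψ x) with hg
  have hψc : Continuous ψ := hdiff.continuous
  have hgnn : ∀ x, 0 ≤ g x := fun x => add_nonneg (by positivity) (hWnonneg _)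
  have hWψle : ∀ x, W (ψ x) ≤ g x := fun x => by
    have : 0 ≤ (1/2) * (deriv ψ x)^2 := by positivity
    simp only [hg]; linarith
  have hsqrt : ∀ x, deriv ψ x = Real.sqrt (2 * W (ψ x)) := fun x => by
    rw [← hBog x, Real.sqrt_sq (le_of_lt (hpos x))]
  have hWcomp : Continuous fun x => W (ψ x) := hWc.comp hψc
  have hsqW : Continuous fun y => Real.sqrt (W y) := Real.continuous_sqrt.comp hWc
  set B := ∫ x, g x with hB
  have hkey : ∀ x, deriv ψ x * Real.sqrt (W (ψ x)) = Real.sqrt 2 * W (ψ x) := fun x => by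
    rw [hsqrt x, Real.sqrt_mul (by norm_num : (0:ℝ) ≤ 2), mul_assoc,
      Real.mul_self_sqrt (hWnonneg _)]
  have hchange : ∀ a b : ℝ, (∫ y in ψ a..ψ b, Real.sqrt (W y))
      = Real.sqrt 2 * ∫ x in a..b, W (ψ x) := by
    intro a b
    rw [← intervalIntegral.integral_comp_smul_deriv
      (fun x _ => hdiff.differentiableAt.hasDerivAt) hd'c.continuousOn hsqW]
    rw [← intervalIntegral.integral_const_mul]
    exact intervalIntegral.integral_congr fun x _ => (hkey x).symm ▸ rfl
  have hWψbound : ∀ a b : ℝ, a ≤ b → (∫ x in a..b, W (ψ x)) ≤ B := by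
    intro a b hab
    rw [intervalIntegral.integral_of_le hab]
    calc ∫ x in Ioc a b, W (ψ x) ≤ ∫ x in Ioc a b, g x := by
          apply setIntegral_mono_on (hWcomp.integrableOn_Ioc) (hE.integrableOn)
            measurableSet_Ioc (fun x _ => hWψle x)
      _ ≤ B := setIntegral_le_integral hE (ae_of_all _ hgnn)
  have hIci : ∀ a b : ℝ, a ≤ b → (∫ y in ψ a..ψ b, Real.sqrt (W y)) ≤ Real.sqrt 2 * B := by
    intro a b hab
    rw [hchange]
    exact mul_le_mul_of_nonneg_left (hWψbound a b hab) (Real.sqrt_nonneg 2)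
  have hmono : StrictMono ψ := strictMono_of_deriv_pos hpos
  have hnormint : ∀ a b : ℝ, (∫ y in a..b, ‖Real.sqrt (W y)‖) = ∫ y in a..b, Real.sqrt (W y) :=
    fun a b => intervalIntegral.integral_congr fun y _ => by
      rw [Real.norm_eq_abs, abs_of_nonneg (Real.sqrt_nonneg _)]
  -- bounded above
  have hbddA : BddAbove (range ψ) := by
    by_contra hub
    have hex : ∀ n : ℕ, ∃ x, (n:ℝ) < ψ x := by
      intro n
      rcases not_bddAbove_iff.mp hub (n:ℝ) with ⟨y, ⟨x, hx⟩, hy⟩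
      exact ⟨x, hx ▸ hy⟩
    choose xs hxs using hex
    set ys : ℕ → ℝ := fun n => max (xs n) 0 with hys
    have hyn : ∀ n : ℕ, (n:ℝ) ≤ ψ (ys n) := fun n =>
      le_trans (le_of_lt (hxs n)) (hmono.monotone (le_max_left _ _))
    have hItop : IntegrableOn (fun y => Real.sqrt (W y)) (Ioi (ψ 0)) := by
      apply integrableOn_Ioi_of_intervalIntegral_norm_bounded (Real.sqrt 2 * B) (ψ 0)
        (fun n : ℕ => hsqW.integrableOn_Ioc) (tendsto_atTop_mono hyn tendsto_natCast_atTop_atTop)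
      filter_upwards with n
      rw [hnormint]
      exact hIci 0 (ys n) (le_max_right _ _)
    apply hdivTop
    have : Ici (0:ℝ) ⊆ Icc 0 (max (ψ 0) 0) ∪ Ioi (ψ 0) := by
      intro y hy
      rcases le_or_gt y (max (ψ 0) 0) with h | h
      · exact Or.inl ⟨hy, h⟩
      · exact Or.inr (lt_of_le_of_lt (le_max_left _ _) h)
    exact ((hsqW.integrableOn_Icc).union hItop).mono_set this
  -- bounded below
  have hbddB : BddBelow (range ψ) := by
    by_contra hlb
    have hex : ∀ n : ℕ, ∃ x, ψ x < -(n:ℝ) := by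
      intro n
      rcases not_bddBelow_iff.mp hlb (-(n:ℝ)) with ⟨y, ⟨x, hx⟩, hy⟩
      exact ⟨x, hx ▸ hy⟩
    choose xs hxs using hex
    set ys : ℕ → ℝ := fun n => min (xs n) 0 with hys
    have hyn : ∀ n : ℕ, ψ (ys n) ≤ -(n:ℝ) := fun n =>
      le_trans (hmono.monotone (min_le_left _ _)) (le_of_lt (hxs n))
    have hIbot : IntegrableOn (fun y => Real.sqrt (W y)) (Iic (ψ 0)) := by
      apply integrableOn_Iic_of_intervalIntegral_norm_bounded (Real.sqrt 2 * B) (ψ 0)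
        (fun n : ℕ => hsqW.integrableOn_Ioc)
        (tendsto_atBot_mono hyn (tendsto_neg_atBot_iff.mpr tendsto_natCast_atTop_atTop))
      filter_upwards with n
      rw [hnormint]
      exact hIci (ys n) 0 (min_le_right _ _)
    apply hdivBot
    have : Iic (0:ℝ) ⊆ Iic (ψ 0) ∪ Icc (min (ψ 0) 0) 0 := by
      intro y hy
      rcases le_or_gt y (ψ 0) with h | h
      · exact Or.inl h
      · exact Or.inr ⟨le_trans (min_le_left _ _) (le_of_lt h), hy⟩
    exact (hIbot.union (hsqW.integrableOn_Icc)).mono_set this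
  -- limits
  set ω₂ := ⨆ x, ψ x with hω₂
  set ω₁ := ⨅ x, ψ x with hω₁
  have htop : Tendsto ψ atTop (nhds ω₂) := tendsto_atTop_ciSup hmono.monotone hbddA
  have hbot : Tendsto ψ atBot (nhds ω₁) := tendsto_atBot_ciInf hmono.monotone hbddB
  -- W ω₂ = 0
  have hlim0 : ∀ (ω : ℝ) (l : Filter ℝ) (hls : ∀ x₀ : ℝ, {x | x₀ ≤ x} ∈ l ∨ {x | x ≤ x₀} ∈ l),
      True → Tendsto ψ l (nhds ω) → True := fun _ _ _ _ _ => trivial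
  have hW2 : W ω₂ = 0 := by
    by_contra hne
    have hcpos : 0 < W ω₂ := lt_of_le_of_ne (hWnonneg _) (Ne.symm hne)
    have : Tendsto (fun x => W (ψ x)) atTop (nhds (W ω₂)) := (hWc.continuousAt.tendsto).comp htop
    have hev : ∀ᶠ x in atTop, W ω₂ / 2 < W (ψ x) :=
      this (Ioi_mem_nhds (by linarith))
    obtain ⟨x₀, hx₀⟩ := hev.exists_forall_of_atTop
    have hconst : IntegrableOn (fun _ : ℝ => W ω₂ / 2) (Ici x₀) := by
      apply Integrable.mono (hE.integrableOn) aestronglyMeasurable_const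
      rw [ae_restrict_iff' measurableSet_Ici]
      refine ae_of_all _ fun x hx => ?_
      rw [Real.norm_eq_abs, Real.norm_eq_abs, abs_of_nonneg (le_of_lt (by linarith [hx₀ x hx])),
        abs_of_nonneg (hgnn x)]
      exact le_trans (le_of_lt (hx₀ x hx)) (hWψle x)
    rcases (integrableOn_const_iff enorm_ne_top).mp hconst with h | h
    · rw [enorm_eq_zero] at h; linarith
    · rw [Real.volume_Ici] at h; exact absurd h (by simp)
  have hW1 : W ω₁ = 0 := by
    by_contra hne
    have hcpos : 0 < W ω₁ := lt_of_le_of_ne (hWnonneg _) (Ne.symm hne)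
    have : Tendsto (fun x => W (ψ x)) atBot (nhds (W ω₁)) := (hWc.continuousAt.tendsto).comp hbot
    have hev : ∀ᶠ x in atBot, W ω₁ / 2 < W (ψ x) :=
      this (Ioi_mem_nhds (by linarith))
    obtain ⟨x₀, hx₀⟩ := hev.exists_forall_of_atBot
    have hconst : IntegrableOn (fun _ : ℝ => W ω₁ / 2) (Iic x₀) := by
      apply Integrable.mono (hE.integrableOn) aestronglyMeasurable_const
      rw [ae_restrict_iff' measurableSet_Iic]
      refine ae_of_all _ fun x hx => ?_
      rw [Real.norm_eq_abs, Real.norm_eq_abs, abs_of_nonneg (le_of_lt (by linarith [hx₀ x hx])),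
        abs_of_nonneg (hgnn x)]
      exact le_trans (le_of_lt (hx₀ x hx)) (hWψle x)
    rcases (integrableOn_const_iff enorm_ne_top).mp hconst with h | h
    · rw [enorm_eq_zero] at h; linarith
    · rw [Real.volume_Iic] at h; exact absurd h (by simp)
  have h12 : ω₁ < ω₂ :=
    lt_of_le_of_lt (ciInf_le hbddB 0) (lt_of_lt_of_le (hmono zero_lt_one) (le_ciSup hbddA 1))
  refine ⟨ω₁, ω₂, hW1, hW2, h12, ?_, hsqrt, hbot, htop⟩
  intro y hy
  obtain ⟨b, hb⟩ := exists_lt_of_lt_ciSup hy.2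
  obtain ⟨a, ha⟩ := exists_lt_of_ciInf_lt hy.1
  have hab : a < b := hmono.lt_iff_lt.mp (lt_trans ha hb)
  obtain ⟨x, _, hx⟩ := intermediate_value_Icc (le_of_lt hab) hψc.continuousOn
    ⟨le_of_lt ha, le_of_lt hb⟩
  have := hBog x
  rw [hx] at this
  nlinarith [hpos x]

end AuxClassification

/-- Classification of finite-energy stationary solutions under (A1)–(A4):
every such solution is a vacuum constant, a kink (increasing Bogomolny
solution connecting two consecutive zeros of `W`), or an antikink
(decreasing Bogomolny solution connecting them in the opposite order). -/
theorem classification_of_stationary_solutions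
    (W : ℝ → ℝ) (hW : ContDiff ℝ (⊤ : ℕ∞) W) (hWnonneg : ∀ y, 0 ≤ W y)
    (hacc : ∀ x : ℝ, ¬ AccPt x (Filter.principal (W ⁻¹' {0})))
    (hnondeg : ∀ ω, W ω = 0 → 0 < iteratedDeriv 2 W ω)
    (hdivTop : ¬ IntegrableOn (fun y => Real.sqrt (W y)) (Set.Ici 0))
    (hdivBot : ¬ IntegrableOn (fun y => Real.sqrt (W y)) (Set.Iic 0))
    (ψ : ℝ → ℝ) (hψ : ContDiff ℝ 2 ψ)
    (hODE : ∀ x, iteratedDeriv 2 ψ x = deriv W (ψ x))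
    (hE : Integrable (fun x => (1/2) * (deriv ψ x)^2 + W (ψ x))) :
    (∃ ω, W ω = 0 ∧ ∀ x, ψ x = ω) ∨
    (∃ ω₁ ω₂, W ω₁ = 0 ∧ W ω₂ = 0 ∧ ω₁ < ω₂ ∧ (∀ y ∈ Set.Ioo ω₁ ω₂, 0 < W y) ∧
      (∀ x, deriv ψ x = Real.sqrt (2 * W (ψ x))) ∧
      Tendsto ψ atBot (nhds ω₁) ∧ Tendsto ψ atTop (nhds ω₂)) ∨
    (∃ ω₁ ω₂, W ω₁ = 0 ∧ W ω₂ = 0 ∧ ω₁ < ω₂ ∧ (∀ y ∈ Set.Ioo ω₁ ω₂, 0 < W y) ∧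
      (∀ x, deriv ψ x = -Real.sqrt (2 * W (ψ x))) ∧
      Tendsto ψ atBot (nhds ω₂) ∧ Tendsto ψ atTop (nhds ω₁)) := by
  -- regularity facts
  have h2 : ContDiff ℝ ((1:ℕ)+1) ψ := by exact_mod_cast hψ
  rw [contDiff_succ_iff_deriv] at h2
  obtain ⟨hdiff, -, hd1c⟩ := h2
  have hd1 : Differentiable ℝ (deriv ψ) := hd1c.differentiable (by norm_num)
  have hd'c : Continuous (deriv ψ) := hd1.continuous
  have hdd : ∀ x, deriv (deriv ψ) x = iteratedDeriv 2 ψ x := fun x => by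
    rw [iteratedDeriv_succ, iteratedDeriv_one]
  have hWd : Differentiable ℝ W := hW.differentiable (by simp)
  -- conserved quantity
  set F : ℝ → ℝ := fun x => (1/2) * (deriv ψ x)^2 - W (ψ x) with hF
  have hFd : ∀ x, HasDerivAt F 0 x := by
    intro x
    have h1 : HasDerivAt (fun x => (1/2) * (deriv ψ x)^2)
        (deriv ψ x * deriv (deriv ψ) x) x := by
      have := ((hd1 x).hasDerivAt.pow 2)
      have h2 := this.const_mul (1/2 : ℝ)
      exact h2.congr_deriv (by ring)
    have h3 : HasDerivAt (fun x => W (ψ x)) (deriv W (ψ x) * deriv ψ x) x :=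
      (hWd _).hasDerivAt.comp x (hdiff x).hasDerivAt
    have := h1.sub h3
    exact this.congr_deriv (by rw [hdd x, hODE x]; ring)
  have hFconst : ∀ x, F x = F 0 := by
    intro x
    exact is_const_of_deriv_eq_zero (fun y => (hFd y).differentiableAt)
      (fun y => (hFd y).deriv) x 0
  -- the constant is zero
  obtain ⟨c, hcdef⟩ : ∃ c, ∀ x, F x = c := ⟨F 0, hFconst⟩
  set g : ℝ → ℝ := fun x => (1/2) * (deriv ψ x)^2 + W (ψ x) with hg
  have hgnn : ∀ x, 0 ≤ g x := fun x => add_nonneg (by positivity) (hWnonneg _)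
  have hginfty : ∀ d : ℝ, 0 < d → (∀ x, d ≤ g x) → False := by
    intro d hd hle
    have : Integrable (fun _ : ℝ => d) := by
      apply hE.mono aestronglyMeasurable_const
      refine ae_of_all _ fun x => ?_
      rw [Real.norm_eq_abs, Real.norm_eq_abs, abs_of_pos hd, abs_of_nonneg (hgnn x)]
      exact hle x
    rcases integrable_const_iff.mp this with h | h
    · linarith
    · have h := h.measure_univ_lt_top; simp [Real.volume_univ] at h
  have hc0 : c = 0 := by
    rcases lt_trichotomy c 0 with hlt | heq | hgt
    · exfalso
      apply hginfty (-c) (by linarith)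
      intro x
      have hx := hcdef x
      have h1 : (0:ℝ) ≤ (1/2) * (deriv ψ x)^2 := by positivity
      have : (1/2) * (deriv ψ x)^2 - W (ψ x) = c := hx
      have h2 : W (ψ x) ≥ -c := by nlinarith [hWnonneg (ψ x)]
      simp only [hg]; nlinarith
    · exact heq
    · exfalso
      apply hginfty c hgt
      intro x
      have hx : (1/2) * (deriv ψ x)^2 - W (ψ x) = c := hcdef x
      simp only [hg]; nlinarith [hWnonneg (ψ x)]
  have hBog : ∀ x, (deriv ψ x)^2 = 2 * W (ψ x) := by
    intro x
    have hx : (1/2) * (deriv ψ x)^2 - W (ψ x) = c := hcdef x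
    rw [hc0] at hx; linarith
  -- case split
  by_cases hzero : ∃ x₀, deriv ψ x₀ = 0
  · -- vacuum
    obtain ⟨x₀, hx₀⟩ := hzero
    set ω := ψ x₀ with hω
    have hWω : W ω = 0 := by
      have := hBog x₀; rw [hx₀] at this
      simpa using this.symm
    obtain ⟨M, hMn, hMb⟩ := quad_bound_s7 W hW hWnonneg ω hWω
    set K := Real.sqrt (2 * M) with hK
    have hbnd : ∀ (φ : ℝ → ℝ), (∀ x, (deriv ψ (φ x))^2 = 2 * W (ψ (φ x))) → True := fun _ _ => trivial
    have habs : ∀ x, |ψ x - ω| ≤ 1 → |deriv ψ x| ≤ K * |ψ x - ω| := by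
      intro x hx
      have h1 : (deriv ψ x)^2 = 2 * W (ψ x) := hBog x
      have h2 : W (ψ x) ≤ M * (ψ x - ω)^2 := hMb (ψ x) hx
      have h3 : (deriv ψ x)^2 ≤ (2 * M) * (ψ x - ω)^2 := by nlinarith
      have := Real.sqrt_le_sqrt (le_of_lt (lt_of_le_of_lt h3 (lt_add_one _)))
      -- better: direct
      have h4 : |deriv ψ x| = Real.sqrt ((deriv ψ x)^2) := (Real.sqrt_sq_eq_abs _).symm
      rw [h4]
      calc Real.sqrt ((deriv ψ x)^2) ≤ Real.sqrt ((2*M) * (ψ x - ω)^2) :=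
            Real.sqrt_le_sqrt h3
        _ = K * |ψ x - ω| := by
            rw [Real.sqrt_mul (by linarith) , Real.sqrt_sq_eq_abs]
    have hfwd : ∀ x, x₀ ≤ x → ψ x - ω = 0 := by
      apply forward_zero (fun x => ψ x - ω) (deriv ψ) K 1 one_pos
        (fun x => (hdiff x).hasDerivAt.sub_const ω)
        (fun x hx => habs x hx) x₀ (by simp [hω])
    have hbwd : ∀ x, x ≤ x₀ → ψ x - ω = 0 := by
      have hneg : ∀ x, HasDerivAt (fun y => ψ (-y) - ω) (-(deriv ψ (-x))) x := by
        intro x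
        have h1 : HasDerivAt (fun y : ℝ => ψ (-y)) (deriv ψ (-x) * (-1)) x :=
          (hdiff (-x)).hasDerivAt.comp x (hasDerivAt_neg x)
        simpa [mul_comm] using h1.sub_const ω
      have := forward_zero (fun y => ψ (-y) - ω) (fun y => -(deriv ψ (-y))) K 1 one_pos
        hneg
        (fun x hx => by
          rw [abs_neg]
          exact habs (-x) hx)
        (-x₀) (by simp [hω])
      intro x hx
      have := this (-x) (by linarith)
      simpa using this
    left
    refine ⟨ω, hWω, fun x => ?_⟩
    rcases le_total x x₀ with h | h
    · have := hbwd x h; linarith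
    · have := hfwd x h; linarith
  · -- no zeros of ψ'
    push_neg at hzero
    have hdich : (∀ x, 0 < deriv ψ x) ∨ (∀ x, deriv ψ x < 0) := by
      rcases lt_or_gt_of_ne (hzero 0) with h0 | h0
      · right
        intro x
        rcases lt_or_gt_of_ne (hzero x) with h | h
        · exact h
        · exfalso
          have h0mem : (0:ℝ) ∈ Set.uIcc (deriv ψ 0) (deriv ψ x) :=
            Set.mem_uIcc.mpr (Or.inl ⟨le_of_lt h0, le_of_lt h⟩)
          obtain ⟨z, _, hz⟩ := intermediate_value_uIcc (f := deriv ψ) (a := 0) (b := x)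
            hd'c.continuousOn (by
              rw [Set.mem_uIcc]
              exact Or.inl ⟨le_of_lt h0, le_of_lt h⟩)
          exact hzero z hz
      · left
        intro x
        rcases lt_or_gt_of_ne (hzero x) with h | h
        · exfalso
          obtain ⟨z, _, hz⟩ := intermediate_value_uIcc (f := deriv ψ) (a := x) (b := 0)
            hd'c.continuousOn (by
              rw [Set.mem_uIcc]
              exact Or.inl ⟨le_of_lt h, le_of_lt h0⟩)
          exact hzero z hz
        · exact h
    rcases hdich with hpos | hneg
    · right; left
      exact kink_case W hW.continuous hWnonneg hdivTop hdivBot ψ hdiff hd'c hpos hBog hE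
    · right; right
      set φ : ℝ → ℝ := fun x => ψ (-x) with hφ
      have hφd : ∀ x, HasDerivAt φ (-(deriv ψ (-x))) x := by
        intro x
        have h1 : HasDerivAt (fun y : ℝ => ψ (-y)) (deriv ψ (-x) * (-1)) x :=
          (hdiff (-x)).hasDerivAt.comp x (hasDerivAt_neg x)
        simpa [hφ, mul_comm] using h1
      have hφderiv : ∀ x, deriv φ x = -(deriv ψ (-x)) := fun x => (hφd x).deriv
      have hφdiff : Differentiable ℝ φ := fun x => (hφd x).differentiableAt
      have hφd'c : Continuous (deriv φ) := by
        have : (deriv φ) = fun x => -(deriv ψ (-x)) := funext hφderiv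
        rw [this]
        exact (hd'c.comp continuous_neg).neg
      have hφpos : ∀ x, 0 < deriv φ x := fun x => by
        rw [hφderiv]; linarith [hneg (-x)]
      have hφBog : ∀ x, (deriv φ x)^2 = 2 * W (φ x) := fun x => by
        rw [hφderiv, neg_pow]
        simpa [hφ] using hBog (-x)
      have hφE : Integrable (fun x => (1/2) * (deriv φ x)^2 + W (φ x)) := by
        have : (fun x => (1/2) * (deriv φ x)^2 + W (φ x))
            = fun x => (1/2) * (deriv ψ (-x))^2 + W (ψ (-x)) := by
          funext x
          rw [hφderiv, neg_pow]
          simp [hφ]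
        rw [this]
        exact hE.comp_neg
      obtain ⟨ω₁, ω₂, h1, h2, h12, hIoo, hsq, hφbot, hφtop⟩ :=
        kink_case W hW.continuous hWnonneg hdivTop hdivBot φ hφdiff hφd'c hφpos hφBog hφE
      refine ⟨ω₁, ω₂, h1, h2, h12, hIoo, ?_, ?_, ?_⟩
      · intro x
        have := hsq (-x)
        rw [hφderiv (-x), neg_neg] at this
        have hψx : φ (-x) = ψ x := by simp [hφ]
        rw [hψx] at this
        linarith
      · -- ψ → ω₂ at atBot
        have : Tendsto (fun x => φ (-x)) atBot (nhds ω₂) :=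
          hφtop.comp tendsto_neg_atBot_atTop
        refine this.congr fun x => ?_
        simp [hφ]
      · have : Tendsto (fun x => φ (-x)) atTop (nhds ω₁) :=
          hφbot.comp tendsto_neg_atTop_atBot
        refine this.congr fun x => ?_
        simp [hφ]
end

section
/- Let W be C^∞, W ≥ 0, and let ω_n < ω_{n+1} be consecutive zeros of W. If φ₀ : ℝ → ℝ has finite potential energy and lim_{x→−∞}φ₀(x) = ω_n, lim_{x→+∞}φ₀(x) = ω_{n+1}, then E_p(φ₀) ≥ ∫_{ω_n}^{ω_{n+1}} √(2W(y)) dy, with equality when φ₀ is the kink H_{n,n+1}. -/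
open Real Filter MeasureTheory

/-- The kink is the ground state in its sector: any finite-energy state
connecting the consecutive vacua `ω₁ < ω₂` has potential energy at least
`∫_{ω₁}^{ω₂} √(2W)`, with equality for the kink. -/
theorem kink_energy_minimizer
    (W : ℝ → ℝ) (hW : ContDiff ℝ (⊤ : ℕ∞) W) (hWnonneg : ∀ y, 0 ≤ W y)
    (ω₁ ω₂ : ℝ) (hlt : ω₁ < ω₂) (hz₁ : W ω₁ = 0) (hz₂ : W ω₂ = 0)
    (hpos : ∀ y ∈ Set.Ioo ω₁ ω₂, 0 < W y)
    (φ₀ : ℝ → ℝ) (hdiff : Differentiable ℝ φ₀)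
    (hE : Integrable (fun x => (1/2) * (deriv φ₀ x)^2 + W (φ₀ x)))
    (hbot : Tendsto φ₀ atBot (nhds ω₁)) (htop : Tendsto φ₀ atTop (nhds ω₂)) :
    (∫ x, ((1/2) * (deriv φ₀ x)^2 + W (φ₀ x))) ≥
        ∫ y in ω₁..ω₂, Real.sqrt (2 * W y) ∧
    (∀ H : ℝ → ℝ, Differentiable ℝ H →
      (∀ x, deriv H x = Real.sqrt (2 * W (H x))) →
      Tendsto H atBot (nhds ω₁) → Tendsto H atTop (nhds ω₂) →
      (∫ x, ((1/2) * (deriv H x)^2 + W (H x))) =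
        ∫ y in ω₁..ω₂, Real.sqrt (2 * W y)) := by
  set g : ℝ → ℝ := fun y => Real.sqrt (2 * W y) with hg_def
  have hgcont : Continuous g := Real.continuous_sqrt.comp (continuous_const.mul hW.continuous)
  have hgnonneg : ∀ y, 0 ≤ g y := fun y => Real.sqrt_nonneg _
  have hgsq : ∀ y, g y ^ 2 = 2 * W y := fun y =>
    Real.sq_sqrt (by have := hWnonneg y; linarith)
  set Γ : ℝ → ℝ := fun φ => ∫ y in (0:ℝ)..φ, g y with hΓ_def
  have hΓderiv : ∀ φ, HasDerivAt Γ (g φ) φ := fun φ =>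
    intervalIntegral.integral_hasDerivAt_right (hgcont.intervalIntegrable _ _)
      (hgcont.aestronglyMeasurable.stronglyMeasurableAtFilter) hgcont.continuousAt
  have hΓdiff : Differentiable ℝ Γ := fun φ => (hΓderiv φ).differentiableAt
  have hΓcont : Continuous Γ := hΓdiff.continuous
  have hΓmono : Monotone Γ := monotone_of_deriv_nonneg hΓdiff fun φ => by
    rw [(hΓderiv φ).deriv]; exact hgnonneg φ
  have hΓint : Γ ω₂ - Γ ω₁ = ∫ y in ω₁..ω₂, g y := by
    have h := intervalIntegral.integral_add_adjacent_intervals (μ := volume) (a := (0:ℝ))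
      (hgcont.intervalIntegrable 0 ω₁) (hgcont.intervalIntegrable ω₁ ω₂)
    simp only [hΓ_def]
    linarith [h]
  constructor
  · -- Bogomolny bound
    set ρ : ℝ → ℝ := fun x => (1/2) * (deriv φ₀ x)^2 + W (φ₀ x) with hρ_def
    have hρnonneg : ∀ x, 0 ≤ ρ x := fun x => by
      have := hWnonneg (φ₀ x); have := sq_nonneg (deriv φ₀ x); simp only [hρ_def]; nlinarith
    set e : ℝ → ℝ := fun x => g (φ₀ x) * deriv φ₀ x with he_def
    have hcomp : ∀ x, HasDerivAt (fun t => Γ (φ₀ t)) (e x) x := fun x =>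
      (hΓderiv (φ₀ x)).comp x (hdiff x).hasDerivAt
    have h_e_le : ∀ x, |e x| ≤ ρ x := fun x => by
      have h1 : |e x| ≤ g (φ₀ x) * |deriv φ₀ x| := by
        rw [he_def, abs_mul, abs_of_nonneg (hgnonneg _)]
      have h2 := hgsq (φ₀ x)
      have h3 := sq_nonneg (g (φ₀ x) - |deriv φ₀ x|)
      have h4 : |deriv φ₀ x| ^ 2 = (deriv φ₀ x) ^ 2 := sq_abs _
      simp only [hρ_def]; nlinarith
    have h_e_meas : AEStronglyMeasurable e volume := by
      exact ((hgcont.comp hdiff.continuous).aestronglyMeasurable).mul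
        (measurable_deriv φ₀).aestronglyMeasurable
    have h_e_int : Integrable e := hE.mono' h_e_meas (ae_of_all _ fun x => by
      simpa [Real.norm_eq_abs] using h_e_le x)
    have key : ∀ a b : ℝ, a ≤ b → Γ (φ₀ b) - Γ (φ₀ a) ≤ ∫ x, ρ x := by
      intro a b hab
      have hftc : ∫ x in a..b, e x = Γ (φ₀ b) - Γ (φ₀ a) :=
        intervalIntegral.integral_eq_sub_of_hasDerivAt (fun x _ => hcomp x)
          (h_e_int.intervalIntegrable)
      have hmono : ∫ x in a..b, e x ≤ ∫ x in a..b, ρ x :=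
        intervalIntegral.integral_mono_on hab (h_e_int.intervalIntegrable)
          (hE.intervalIntegrable) fun x _ => (le_abs_self _).trans (h_e_le x)
      have hle : ∫ x in a..b, ρ x ≤ ∫ x, ρ x := by
        rw [intervalIntegral.integral_of_le hab]
        exact setIntegral_le_integral hE (ae_of_all _ hρnonneg)
      linarith
    have hlim : Tendsto (fun n : ℝ => Γ (φ₀ n) - Γ (φ₀ (-n))) atTop
        (nhds (Γ ω₂ - Γ ω₁)) := by
      have t1 : Tendsto (fun n : ℝ => Γ (φ₀ n)) atTop (nhds (Γ ω₂)) :=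
        (hΓcont.continuousAt.tendsto).comp htop
      have t2 : Tendsto (fun n : ℝ => Γ (φ₀ (-n))) atTop (nhds (Γ ω₁)) :=
        ((hΓcont.continuousAt.tendsto).comp hbot).comp tendsto_neg_atTop_atBot
      exact t1.sub t2
    have : Γ ω₂ - Γ ω₁ ≤ ∫ x, ρ x := by
      refine le_of_tendsto hlim ?_
      filter_upwards [eventually_ge_atTop (0:ℝ)] with n hn
      exact key (-n) n (by linarith)
    rw [hΓint] at this
    exact this
  · -- equality for the kink
    intro H hHdiff hHode hHbot hHtop
    have hH'nonneg : ∀ x, 0 ≤ deriv H x := fun x => by rw [hHode x]; exact Real.sqrt_nonneg _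
    have hHmono : Monotone H := monotone_of_deriv_nonneg hHdiff hH'nonneg
    have hHle : ∀ x, H x ≤ ω₂ := fun x =>
      ge_of_tendsto hHtop ((eventually_ge_atTop x).mono fun y hy => hHmono hy)
    have hHge : ∀ x, ω₁ ≤ H x := fun x =>
      le_of_tendsto hHbot ((eventually_le_atBot x).mono fun y hy => hHmono hy)
    set ρH : ℝ → ℝ := fun x => (1/2) * (deriv H x)^2 + W (H x) with hρH_def
    have hρH_eq : ∀ x, ρH x = g (H x) * deriv H x := fun x => by
      simp only [hρH_def, hHode x]
      have h2 := hgsq (H x)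
      simp only [hg_def] at h2 ⊢
      nlinarith
    have hρHnonneg : ∀ x, 0 ≤ ρH x := fun x => by
      have := hWnonneg (H x); have := sq_nonneg (deriv H x); simp only [hρH_def]; nlinarith
    have hderivH_cont : Continuous (deriv H) := by
      have : deriv H = fun x => g (H x) := funext fun x => hHode x
      rw [this]; exact hgcont.comp hHdiff.continuous
    have hρHcont : Continuous ρH := by
      exact ((continuous_const.mul (hderivH_cont.pow 2)).add
        (hW.continuous.comp hHdiff.continuous))
    have hcompH : ∀ x, HasDerivAt (fun t => Γ (H t)) (ρH x) x := fun x => by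
      rw [hρH_eq x]
      exact (hΓderiv (H x)).comp x (hHdiff x).hasDerivAt
    have hftcH : ∀ a b : ℝ, ∫ x in a..b, ρH x = Γ (H b) - Γ (H a) := fun a b =>
      intervalIntegral.integral_eq_sub_of_hasDerivAt (fun x _ => hcompH x)
        (hρHcont.intervalIntegrable a b)
    have hbound : ∀ᶠ n : ℝ in atTop, (∫ x in (-n)..n, ‖ρH x‖) ≤ Γ ω₂ - Γ ω₁ := by
      filter_upwards [eventually_ge_atTop (0:ℝ)] with n hn
      have hnorm : ∀ x, ‖ρH x‖ = ρH x := fun x => Real.norm_of_nonneg (hρHnonneg x)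
      simp only [hnorm]
      rw [hftcH]
      have h1 : Γ (H n) ≤ Γ ω₂ := hΓmono (hHle n)
      have h2 : Γ ω₁ ≤ Γ (H (-n)) := hΓmono (hHge (-n))
      linarith
    have hint : Integrable ρH :=
      integrable_of_intervalIntegral_norm_bounded (Γ ω₂ - Γ ω₁)
        (fun n : ℝ => hρHcont.integrableOn_Ioc) tendsto_neg_atTop_atBot tendsto_id hbound
    have hlim1 : Tendsto (fun n : ℝ => ∫ x in (-n)..n, ρH x) atTop (nhds (∫ x, ρH x)) :=
      intervalIntegral_tendsto_integral hint tendsto_neg_atTop_atBot tendsto_id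
    have hlim2 : Tendsto (fun n : ℝ => ∫ x in (-n)..n, ρH x) atTop
        (nhds (Γ ω₂ - Γ ω₁)) := by
      have t1 : Tendsto (fun n : ℝ => Γ (H n)) atTop (nhds (Γ ω₂)) :=
        (hΓcont.continuousAt.tendsto).comp hHtop
      have t2 : Tendsto (fun n : ℝ => Γ (H (-n))) atTop (nhds (Γ ω₁)) :=
        ((hΓcont.continuousAt.tendsto).comp hHbot).comp tendsto_neg_atTop_atBot
      have := t1.sub t2
      refine this.congr fun n => (hftcH (-n) n).symm
    have := tendsto_nhds_unique hlim1 hlim2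
    rw [this, hΓint]
end
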